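/- arXiv:1308.3242 — 8 statements merged into one kernel-verified Lean document; each statement's English description precedes it below -/
import Mathlib

section
/- For every finite simple graph G on n vertices and every nonnegative integer t, the number of independent sets of size t satisfies i_t(G) = Σ_{j=0}^{t} C(n−j, t−j) · N_j(G), where the identity is understood in the integers. -/
open Finset

section Aux

variable {V : Type*} (G : SimpleGraph V) [Fintype V] [DecidableEq V] [DecidableRel G.Adj]

/-- Edges of `G` with both endpoints in `J`. -/
def EE (J : Finset V) : Finset (Sym2 V) :=
  G.edgeFinset.filter fun e => ∀ v ∈ e, v ∈ J

lemma EE_mono {J T : Finset V} (h : J ⊆ T) : EE G J ⊆ EE G T := by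
  intro e he
  simp only [EE, mem_filter] at he ⊢
  exact ⟨he.1, fun v hv => h (he.2 v hv)⟩

lemma EE_empty_iff (T : Finset V) :
    EE G T = ∅ ↔ ∀ u ∈ T, ∀ v ∈ T, ¬ G.Adj u v := by
  constructor
  · intro h u hu v hv hadj
    have : s(u, v) ∈ EE G T := by
      simp only [EE, mem_filter, SimpleGraph.mem_edgeFinset, SimpleGraph.mem_edgeSet]
      refine ⟨hadj, ?_⟩
      intro w hw
      rw [Sym2.mem_iff] at hw
      rcases hw with rfl | rfl <;> assumption
    rw [h] at this
    exact absurd this (notMem_empty _)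
  · intro h
    rw [Finset.eq_empty_iff_forall_notMem]
    intro e he
    simp only [EE, mem_filter, SimpleGraph.mem_edgeFinset, SimpleGraph.mem_edgeSet] at he
    induction e with
    | _ u v =>
      exact h u (he.2 u (by simp)) v (he.2 v (by simp)) he.1

end Aux

/-- `numIndep G t` is the number of independent sets of size `t` in `G`, i.e. the number of
`t`-element subsets of the vertex set containing no edge. -/
def numIndep {V : Type*} (G : SimpleGraph V) [Fintype V] [DecidableEq V] [DecidableRel G.Adj]
    (t : ℕ) : ℕ :=
  (((univ : Finset V).powersetCard t).filter fun s => ∀ u ∈ s, ∀ v ∈ s, ¬ G.Adj u v).card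

/-- `psi G J` is `ψ(J)`: the sum of `(-1)^{|S|}` over all edge-coverings `S` of the induced
subgraph `G[J]`, i.e. over all sets `S` of edges of `G` having both endpoints in `J` and such
that every vertex of `J` lies on some edge of `S`.  This equals the number of even edge-coverings
minus the number of odd edge-coverings of `G[J]`. -/
def psi {V : Type*} (G : SimpleGraph V) [Fintype V] [DecidableEq V] [DecidableRel G.Adj]
    (J : Finset V) : ℤ :=
  ∑ S ∈ (G.edgeFinset.filter fun e => ∀ v ∈ e, v ∈ J).powerset,
    if ∀ v ∈ J, ∃ e ∈ S, v ∈ e then (-1 : ℤ) ^ S.card else 0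

/-- `bigN G j` is `N_j(G) = ∑_{J ⊆ V(G), |J| = j} ψ(J)` for `j ≥ 1`, with `N_0(G) = 1`. -/
def bigN {V : Type*} (G : SimpleGraph V) [Fintype V] [DecidableEq V] [DecidableRel G.Adj]
    (j : ℕ) : ℤ :=
  if j = 0 then 1 else ∑ J ∈ (univ : Finset V).powersetCard j, psi G J

section Main

variable {V : Type*} (G : SimpleGraph V) [Fintype V] [DecidableEq V] [DecidableRel G.Adj]

lemma psi_eq (J : Finset V) :
    psi G J = ∑ S ∈ (EE G J).powerset,
      if ∀ v ∈ J, ∃ e ∈ S, v ∈ e then (-1 : ℤ) ^ S.card else 0 := rfl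

/-- Extension of the inner sum of `psi` to the powerset of a larger edge set. -/
lemma psi_eq_big {J T : Finset V} (hJT : J ⊆ T) :
    psi G J = ∑ S ∈ (EE G T).powerset,
      if S ⊆ EE G J ∧ ∀ v ∈ J, ∃ e ∈ S, v ∈ e then (-1 : ℤ) ^ S.card else 0 := by
  rw [psi_eq]
  have hext := Finset.sum_subset (Finset.powerset_mono.2 (EE_mono G hJT))
    (f := fun S : Finset (Sym2 V) =>
      if S ⊆ EE G J ∧ ∀ v ∈ J, ∃ e ∈ S, v ∈ e then (-1 : ℤ) ^ S.card else 0)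
    (by
      intro S hS hS'
      rw [mem_powerset] at hS'
      exact if_neg (by rintro ⟨hc1, -⟩; exact hS' hc1))
  rw [← hext]
  apply Finset.sum_congr rfl
  intro S hS
  rw [mem_powerset] at hS
  simp [hS]

lemma key (T : Finset V) :
    ∑ J ∈ T.powerset, psi G J
      = if (∀ u ∈ T, ∀ v ∈ T, ¬ G.Adj u v) then 1 else 0 := by
  have h1 : ∑ J ∈ T.powerset, psi G J
      = ∑ J ∈ T.powerset, ∑ S ∈ (EE G T).powerset,
          (if S ⊆ EE G J ∧ ∀ v ∈ J, ∃ e ∈ S, v ∈ e then (-1 : ℤ) ^ S.card else 0) := by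
    apply Finset.sum_congr rfl
    intro J hJ
    exact psi_eq_big G (mem_powerset.1 hJ)
  rw [h1, Finset.sum_comm]
  have h2 : ∀ S ∈ (EE G T).powerset,
      (∑ J ∈ T.powerset,
        if S ⊆ EE G J ∧ ∀ v ∈ J, ∃ e ∈ S, v ∈ e then (-1 : ℤ) ^ S.card else 0)
      = (-1 : ℤ) ^ S.card := by
    intro S hS
    rw [mem_powerset] at hS
    set J0 : Finset V := T.filter (fun v => ∃ e ∈ S, v ∈ e) with hJ0
    have hJ0T : J0 ∈ T.powerset := mem_powerset.2 (filter_subset _ _)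
    have hcond : ∀ J ∈ T.powerset,
        ((S ⊆ EE G J ∧ ∀ v ∈ J, ∃ e ∈ S, v ∈ e) ↔ J = J0) := by
      intro J hJ
      rw [mem_powerset] at hJ
      constructor
      · rintro ⟨hSE, hcov⟩
        apply Finset.Subset.antisymm
        · intro v hv
          rw [hJ0, mem_filter]
          exact ⟨hJ hv, hcov v hv⟩
        · intro v hv
          rw [hJ0, mem_filter] at hv
          obtain ⟨-, e, heS, hve⟩ := hv
          have := hSE heS
          simp only [EE, mem_filter] at this
          exact this.2 v hve
      · rintro rfl
        constructor
        · intro e he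
          have heT := hS he
          simp only [EE, mem_filter] at heT ⊢
          refine ⟨heT.1, fun v hv => ?_⟩
          rw [hJ0, mem_filter]
          exact ⟨heT.2 v hv, e, he, hv⟩
        · intro v hv
          rw [hJ0, mem_filter] at hv
          exact hv.2
    rw [Finset.sum_congr rfl (fun J hJ => by rw [if_congr (hcond J hJ) rfl rfl])]
    rw [Finset.sum_ite_eq' T.powerset J0 (fun _ => (-1 : ℤ) ^ S.card), if_pos hJ0T]
  rw [Finset.sum_congr rfl h2, Finset.sum_powerset_neg_one_pow_card,
    if_congr (EE_empty_iff G T) rfl rfl]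

lemma count_supersets {J : Finset V} {t : ℕ} (hJt : J.card ≤ t) :
    (((univ : Finset V).powersetCard t).filter fun T => J ⊆ T).card
      = (Fintype.card V - J.card).choose (t - J.card) := by
  rw [show Fintype.card V - J.card = (Jᶜ : Finset V).card from (Finset.card_compl J).symm,
    ← Finset.card_powersetCard]
  apply Finset.card_bij (fun T _ => T \ J)
  · intro T hT
    simp only [mem_filter, mem_powersetCard] at hT
    rw [mem_powersetCard]
    refine ⟨?_, ?_⟩
    · intro v hv
      rw [mem_sdiff] at hv
      rw [Finset.mem_compl]
      exact hv.2
    · rw [card_sdiff_of_subset hT.2, hT.1.2]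
  · intro T1 hT1 T2 hT2 h
    simp only [mem_filter] at hT1 hT2
    have : T1 \ J ∪ J = T2 \ J ∪ J := by rw [h]
    rwa [Finset.sdiff_union_of_subset hT1.2, Finset.sdiff_union_of_subset hT2.2] at this
  · intro S hS
    rw [mem_powersetCard] at hS
    have hdisj : Disjoint S J := by
      rw [Finset.disjoint_left]
      intro v hv
      have := hS.1 hv
      rwa [Finset.mem_compl] at this
    refine ⟨S ∪ J, ?_, ?_⟩
    · simp only [mem_filter, mem_powersetCard]
      refine ⟨⟨subset_univ _, ?_⟩, subset_union_right⟩
      rw [Finset.card_union_of_disjoint hdisj, hS.2]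
      omega
    · rw [Finset.union_sdiff_right, Finset.sdiff_eq_self_of_disjoint hdisj]

lemma count_supersets_zero {J : Finset V} {t : ℕ} (hJt : t < J.card) :
    (((univ : Finset V).powersetCard t).filter fun T => J ⊆ T).card = 0 := by
  rw [Finset.card_eq_zero, Finset.eq_empty_iff_forall_notMem]
  intro T hT
  simp only [mem_filter, mem_powersetCard] at hT
  have := Finset.card_le_card hT.2
  omega

lemma bigN_eq (j : ℕ) :
    bigN G j = ∑ J ∈ (univ : Finset V).powersetCard j, psi G J := by
  unfold bigN
  split_ifs with h
  · subst h
    rw [Finset.powersetCard_zero, Finset.sum_singleton, psi_eq]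
    have hE : EE G (∅ : Finset V) = ∅ := by
      rw [EE_empty_iff]; simp
    rw [hE]
    simp
  · rfl

end Main

/-- For every finite simple graph `G` on `n` vertices and every nonnegative integer `t`,
`i_t(G) = ∑_{j=0}^{t} C(n−j, t−j) · N_j(G)`, as an identity of integers. -/
theorem stmt_0 {V : Type*} [Fintype V] [DecidableEq V] (G : SimpleGraph V) [DecidableRel G.Adj]
    (n : ℕ) (hn : Fintype.card V = n) (t : ℕ) :
    (numIndep G t : ℤ) =
      ∑ j ∈ Finset.range (t + 1), ((n - j).choose (t - j) : ℤ) * bigN G j := by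
  subst hn
  -- Step 1: numIndep as a sum of indicators, then via `key` as a double sum.
  have h1 : (numIndep G t : ℤ)
      = ∑ T ∈ (univ : Finset V).powersetCard t, ∑ J ∈ T.powerset, psi G J := by
    unfold numIndep
    rw [Finset.card_filter]
    push_cast
    apply Finset.sum_congr rfl
    intro T _
    rw [key]
  rw [h1]
  -- Step 2: swap the sums.
  have h2 : ∑ T ∈ (univ : Finset V).powersetCard t, ∑ J ∈ T.powerset, psi G J
      = ∑ J ∈ (univ : Finset V).powerset,
          ∑ _T ∈ ((univ : Finset V).powersetCard t).filter (fun T => J ⊆ T), psi G J := by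
    apply Finset.sum_comm'
    intro T J
    simp only [mem_filter, mem_powerset, mem_powersetCard]
    constructor
    · rintro ⟨ha, hb⟩
      exact ⟨⟨ha, hb⟩, subset_univ _⟩
    · rintro ⟨⟨ha, hb⟩, -⟩
      exact ⟨ha, hb⟩
  rw [h2]
  -- Step 3: inner sum is constant; count supersets.
  have h3 : ∀ J ∈ (univ : Finset V).powerset,
      (∑ _T ∈ ((univ : Finset V).powersetCard t).filter (fun T => J ⊆ T), psi G J)
      = (if J.card ≤ t then ((Fintype.card V - J.card).choose (t - J.card) : ℤ) else 0)
          * psi G J := by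
    intro J _
    rw [Finset.sum_const]
    split_ifs with h
    · rw [count_supersets h, nsmul_eq_mul]
    · rw [count_supersets_zero (by omega)]
      simp
  rw [Finset.sum_congr rfl h3]
  -- Step 4: split the powerset sum by cardinality.
  have h4 : ∑ J ∈ (univ : Finset V).powerset,
        (if J.card ≤ t then ((Fintype.card V - J.card).choose (t - J.card) : ℤ) else 0)
          * psi G J
      = ∑ j ∈ Finset.range (Fintype.card V + 1),
          (if j ≤ t then ((Fintype.card V - j).choose (t - j) : ℤ) else 0)
            * ∑ J ∈ (univ : Finset V).powersetCard j, psi G J := by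
    rw [← Finset.sum_fiberwise_of_maps_to (g := fun J : Finset V => J.card)
      (t := Finset.range (Fintype.card V + 1))
      (fun J hJ => by
        rw [mem_range, Nat.lt_succ_iff, ← Finset.card_univ]
        exact Finset.card_le_card (mem_powerset.1 hJ))]
    apply Finset.sum_congr rfl
    intro j _
    rw [Finset.mul_sum, ← Finset.powersetCard_eq_filter]
    apply Finset.sum_congr rfl
    intro J hJ
    rw [(mem_powersetCard.1 hJ).2]
  rw [h4]
  -- Step 5: reindex to `range (t+1)` and use `bigN_eq`.
  have hL : ∑ j ∈ Finset.range (Fintype.card V + 1),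
        (if j ≤ t then ((Fintype.card V - j).choose (t - j) : ℤ) else 0)
          * ∑ J ∈ (univ : Finset V).powersetCard j, psi G J
      = ∑ j ∈ Finset.range (min (Fintype.card V) t + 1),
        (if j ≤ t then ((Fintype.card V - j).choose (t - j) : ℤ) else 0)
          * ∑ J ∈ (univ : Finset V).powersetCard j, psi G J := by
    symm
    apply Finset.sum_subset (Finset.range_subset_range.2 (by omega))
    intro j hj hj'
    rw [mem_range] at hj hj'
    rw [if_neg (by omega)]
    ring
  have hR : ∑ j ∈ Finset.range (t + 1),
        (((Fintype.card V - j).choose (t - j) : ℤ)) * bigN G j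
      = ∑ j ∈ Finset.range (min (Fintype.card V) t + 1),
        (((Fintype.card V - j).choose (t - j) : ℤ)) * bigN G j := by
    symm
    apply Finset.sum_subset (Finset.range_subset_range.2 (by omega))
    intro j hj hj'
    rw [mem_range] at hj hj'
    have hjV : Fintype.card V < j := by omega
    rw [bigN_eq, Finset.powersetCard_eq_empty.2 (by rwa [Finset.card_univ]),
      Finset.sum_empty]
    ring
  rw [hL, hR]
  apply Finset.sum_congr rfl
  intro j hj
  rw [mem_range] at hj
  rw [if_pos (by omega), bigN_eq]
end

section
/- For every finite simple graph G, N_3(G) = Σ_{v ∈ V(G)} C(d(v), 2) − k_3(G), where d(v) denotes the degree of v, and the identity is understood in the integers. -/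
open Finset

/-- `numInducedReg G k d` is the number of `k`-element vertex subsets `J` such that every vertex
of `J` has exactly `d` neighbours inside `J`, i.e. such that the induced subgraph `G[J]` is
`d`-regular.  In particular `numInducedReg G 3 2 = k₃(G)` (triangles),
`numInducedReg G 4 3 = k₄(G)`, `numInducedReg G 4 2 = c₄(G)` (a 2-regular graph on 4 vertices is
a 4-cycle), `numInducedReg G 4 1 = (k₂⊎k₂)(G)` (a 1-regular graph on 4 vertices is a perfect
matching), and `numInducedReg G 5 2 = c₅(G)` (a 2-regular graph on 5 vertices is a 5-cycle). -/
def numInducedReg {V : Type*} (G : SimpleGraph V) [Fintype V] [DecidableEq V] [DecidableRel G.Adj]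
    (k d : ℕ) : ℕ :=
  (((univ : Finset V).powersetCard k).filter
    fun J => ∀ v ∈ J, (J.filter fun u => G.Adj v u).card = d).card

section Aux

variable {V : Type*} [Fintype V] [DecidableEq V] (G : SimpleGraph V) [DecidableRel G.Adj]

private lemma edge_filter_three' (a b c : V) :
    (G.edgeFinset.filter fun e => ∀ v ∈ e, v ∈ ({a,b,c} : Finset V)) =
      (if G.Adj a b then {s(a,b)} else ∅) ∪ (if G.Adj a c then {s(a,c)} else ∅)
        ∪ (if G.Adj b c then {s(b,c)} else ∅) := by
  ext e
  induction e using Sym2.ind with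
  | _ x y =>
    simp only [mem_filter, SimpleGraph.mem_edgeFinset, SimpleGraph.mem_edgeSet, Sym2.mem_iff,
      mem_union, mem_insert, mem_singleton, forall_eq_or_imp, forall_eq]
    constructor
    · rintro ⟨hxy, (rfl|rfl|rfl), (rfl|rfl|rfl)⟩ <;>
        simp_all [Sym2.eq_iff, G.adj_comm]
    · intro h
      split_ifs at h <;>
        simp only [mem_union, mem_insert, mem_singleton, notMem_empty, or_false,
          false_or, Sym2.eq_iff] at h <;>
        rcases h with (⟨rfl,rfl⟩|⟨rfl,rfl⟩)|(⟨rfl,rfl⟩|⟨rfl,rfl⟩)|(⟨rfl,rfl⟩|⟨rfl,rfl⟩) <;>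
        simp_all [G.adj_comm]

private lemma psi_three' (a b c : V) (hab : a ≠ b) (hac : a ≠ c) (hbc : b ≠ c) :
    psi G {a,b,c} =
      ((if G.Adj a b then 1 else 0) + (if G.Adj a c then 1 else 0)
        + (if G.Adj b c then 1 else 0) : ℤ) - 1
      + (if ¬G.Adj a b ∧ ¬G.Adj a c ∧ ¬G.Adj b c then 1 else 0) := by
  have hba := hab.symm; have hca := hac.symm; have hcb := hbc.symm
  have h1 : s(a,b) ≠ s(a,c) := by simp [Sym2.eq_iff, hab, hac, hbc, hcb]
  have h2 : s(a,b) ≠ s(b,c) := by simp [Sym2.eq_iff, hab, hac, hbc, hca]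
  have h3 : s(a,c) ≠ s(b,c) := by simp [Sym2.eq_iff, hab, hac, hbc, hca, hba]
  have n1 : s(a,b) ∉ ({s(a,c),s(b,c)} : Finset (Sym2 V)) := by simp [h1, h2]
  have n2 : s(a,b) ∉ ({s(a,c)} : Finset (Sym2 V)) := by simp [h1]
  have n3 : s(a,b) ∉ ({s(b,c)} : Finset (Sym2 V)) := by simp [h2]
  have n4 : s(a,c) ∉ ({s(b,c)} : Finset (Sym2 V)) := by simp [h3]
  have n5 : s(a,b) ∉ (∅ : Finset (Sym2 V)) := Finset.notMem_empty _
  have n6 : s(a,c) ∉ (∅ : Finset (Sym2 V)) := Finset.notMem_empty _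
  have n7 : s(b,c) ∉ (∅ : Finset (Sym2 V)) := Finset.notMem_empty _
  have w1 : ({s(a,b)} : Finset (Sym2 V)) = insert s(a,b) ∅ := rfl
  have w2 : ({s(a,c)} : Finset (Sym2 V)) = insert s(a,c) ∅ := rfl
  have w3 : ({s(b,c)} : Finset (Sym2 V)) = insert s(b,c) ∅ := rfl
  rw [psi, edge_filter_three']
  by_cases p : G.Adj a b <;> by_cases q : G.Adj a c <;> by_cases r : G.Adj b c <;>
    simp only [p, q, r, if_true, if_false, union_empty, empty_union, union_assoc,
      not_true, not_false_iff, true_and, false_and, and_true, and_false,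
      Finset.insert_union, Finset.empty_union, ← Finset.insert_eq] <;>
    (try simp only [Finset.sum_powerset_insert n1, Finset.sum_powerset_insert n2,
      Finset.sum_powerset_insert n3, Finset.sum_powerset_insert n4]) <;>
    (try simp only [w1, w2, w3]) <;>
    (try simp only [Finset.sum_powerset_insert n5, Finset.sum_powerset_insert n6,
      Finset.sum_powerset_insert n7, Finset.powerset_empty, Finset.sum_singleton]) <;>
    (try simp [Sym2.mem_iff, hab, hba, hac, hca, hbc, hcb, h1, h2, h3,
      Finset.card_insert_of_notMem, Finset.mem_insert, Finset.mem_singleton,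
      Finset.notMem_empty]) <;>
    (try norm_num) <;>
    (first
      | (rw [if_neg (fun h => (h a).1 rfl)]; norm_num)
      | exact ⟨c, fun _ _ => rfl⟩)

private lemma psi_card_three' (J : Finset V) (hJ : J.card = 3) :
    psi G J = ((J.filter fun v => (J.filter fun u => G.Adj v u).card = 2).card : ℤ)
      - (if ∀ v ∈ J, (J.filter fun u => G.Adj v u).card = 2 then 1 else 0) := by
  obtain ⟨a, b, c, hab, hac, hbc, rfl⟩ := Finset.card_eq_three.mp hJ
  rw [psi_three' G a b c hab hac hbc]
  have hba := hab.symm; have hca := hac.symm; have hcb := hbc.symm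
  by_cases p : G.Adj a b <;> by_cases q : G.Adj a c <;> by_cases r : G.Adj b c <;>
    simp [Finset.filter_insert, Finset.filter_singleton, p, q, r,
      G.adj_comm b a, G.adj_comm c a, G.adj_comm c b,
      hab, hba, hac, hca, hbc, hcb, Finset.card_insert_of_notMem]

private lemma cherry_count' (v : V) :
    ((((univ : Finset V).powersetCard 3).filter
        fun J => v ∈ J ∧ (J.filter fun u => G.Adj v u).card = 2).card)
      = (G.degree v).choose 2 := by
  rw [← SimpleGraph.card_neighborFinset_eq_degree, ← Finset.card_powersetCard]
  apply Finset.card_bij (fun J _ => J.erase v)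
  · intro J hJ
    simp only [Finset.mem_filter, Finset.mem_powersetCard_univ] at hJ
    obtain ⟨hc, hv, hd⟩ := hJ
    have hsub : J.filter (fun u => G.Adj v u) ⊆ J.erase v := by
      intro u hu
      simp only [Finset.mem_filter] at hu
      exact Finset.mem_erase.mpr ⟨fun h => G.irrefl (h ▸ hu.2), hu.1⟩
    have hce : (J.erase v).card = 2 := by rw [Finset.card_erase_of_mem hv, hc]
    have heq : J.filter (fun u => G.Adj v u) = J.erase v :=
      Finset.eq_of_subset_of_card_le hsub (by rw [hce, hd])
    rw [Finset.mem_powersetCard]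
    refine ⟨fun u hu => ?_, hce⟩
    rw [← heq, Finset.mem_filter] at hu
    exact (G.mem_neighborFinset v u).mpr hu.2
  · intro J1 h1 J2 h2 he
    simp only [Finset.mem_filter] at h1 h2
    have := congrArg (insert v) he
    rwa [Finset.insert_erase h1.2.1, Finset.insert_erase h2.2.1] at this
  · intro P hP
    rw [Finset.mem_powersetCard] at hP
    obtain ⟨hPN, hP2⟩ := hP
    have hvP : v ∉ P := fun h => G.irrefl ((G.mem_neighborFinset v v).mp (hPN h))
    have hfil : (insert v P).filter (fun u => G.Adj v u) = P := by
      rw [Finset.filter_insert, if_neg G.irrefl]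
      exact Finset.filter_true_of_mem fun u hu => (G.mem_neighborFinset v u).mp (hPN hu)
    refine ⟨insert v P, ?_, Finset.erase_insert hvP⟩
    simp only [Finset.mem_filter, Finset.mem_powersetCard_univ]
    exact ⟨by rw [Finset.card_insert_of_notMem hvP, hP2], Finset.mem_insert_self v P,
      by rw [hfil, hP2]⟩

private lemma cherry_sum' :
    ∑ J ∈ (univ : Finset V).powersetCard 3,
        ((J.filter fun v => (J.filter fun u => G.Adj v u).card = 2).card : ℤ)
      = ∑ v : V, ((G.degree v).choose 2 : ℤ) := by
  have step1 : ∀ J : Finset V,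
      ((J.filter fun v => (J.filter fun u => G.Adj v u).card = 2).card : ℤ)
        = ∑ v : V, if v ∈ J ∧ (J.filter fun u => G.Adj v u).card = 2 then (1:ℤ) else 0 := by
    intro J
    rw [Finset.sum_boole]
    congr 1
    rw [← Finset.filter_filter]
    congr 1
    simp [Finset.filter_mem_eq_inter]
  simp only [step1]
  rw [Finset.sum_comm]
  refine Finset.sum_congr rfl fun v _ => ?_
  rw [Finset.sum_boole, cherry_count']

end Aux

/-- For every finite simple graph `G`,
`N_3(G) = ∑_{v ∈ V(G)} C(d(v), 2) − k_3(G)`, as an identity of integers. -/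
theorem stmt_1 {V : Type*} [Fintype V] [DecidableEq V] (G : SimpleGraph V) [DecidableRel G.Adj] :
    bigN G 3 = (∑ v : V, ((G.degree v).choose 2 : ℤ)) - numInducedReg G 3 2 := by
  have h0 : bigN G 3 = ∑ J ∈ (univ : Finset V).powersetCard 3, psi G J := by
    rw [bigN]; norm_num
  rw [h0, Finset.sum_congr rfl
    (fun J hJ => psi_card_three' G J (Finset.mem_powersetCard_univ.mp hJ))]
  rw [Finset.sum_sub_distrib, cherry_sum']
  congr 1
  rw [Finset.sum_boole, numInducedReg]
end

section
/- For every finite simple graph G, N_4(G) = −Σ_{v ∈ V(G)} C(d(v), 3) + (k_2⊎k_2)(G) − c_4(G) + k_4(G), where d(v) denotes the degree of v, and the identity is understood in the integers. -/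
open Finset

section Aux

variable {V : Type*} [Fintype V] [DecidableEq V] (G : SimpleGraph V) [DecidableRel G.Adj]

lemma psi_eq_indep (J : Finset V) (hJ : J.card = 4) :
    (∑ S ∈ (G.edgeFinset.filter fun e => ∀ v ∈ e, v ∈ J).powerset,
      if ∀ v ∈ J, ∃ e ∈ S, v ∈ e then (-1 : ℤ) ^ S.card else 0)
    = ∑ T ∈ J.powerset, if ∀ a ∈ T, ∀ b ∈ T, ¬ G.Adj a b then (-1 : ℤ) ^ T.card else 0 := by
  classical
  set E := G.edgeFinset.filter fun e => ∀ v ∈ e, v ∈ J with hE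
  -- step 1: rewrite each cover indicator as sum over T
  have h1 : ∀ S ∈ E.powerset,
      (if ∀ v ∈ J, ∃ e ∈ S, v ∈ e then (-1 : ℤ) ^ S.card else 0)
      = ∑ T ∈ J.powerset,
          if ∀ v ∈ T, ∀ e ∈ S, v ∉ e then (-1 : ℤ) ^ (S.card + T.card) else 0 := by
    intro S hS
    set U := J.filter (fun v => ∀ e ∈ S, v ∉ e) with hU
    have : (∑ T ∈ J.powerset,
        if ∀ v ∈ T, ∀ e ∈ S, v ∉ e then (-1 : ℤ) ^ (S.card + T.card) else 0)
        = (-1 : ℤ) ^ S.card * ∑ T ∈ U.powerset, (-1 : ℤ) ^ T.card := by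
      rw [Finset.mul_sum]
      rw [← Finset.sum_filter_of_ne (s := J.powerset)
        (f := fun T => if ∀ v ∈ T, ∀ e ∈ S, v ∉ e then (-1 : ℤ) ^ (S.card + T.card) else 0)
        (p := fun T => T ∈ U.powerset)]
      · apply Finset.sum_congr
        · ext T
          simp only [mem_filter, mem_powerset]
          constructor
          · rintro ⟨-, h3⟩; exact h3
          · intro h; exact ⟨h.trans (filter_subset _ _), h⟩
        · intro T hT
          rw [mem_powerset] at hT
          have : ∀ v ∈ T, ∀ e ∈ S, v ∉ e := by
            intro v hv; exact (Finset.mem_filter.1 (hT hv)).2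
          rw [if_pos this, pow_add]
      · intro T hT hne
        have hcond : ∀ w ∈ T, ∀ e ∈ S, w ∉ e := by
          by_contra hc; rw [if_neg hc] at hne; exact hne rfl
        rw [mem_powerset, hU, subset_iff]
        intro v hv
        rw [mem_filter]
        exact ⟨mem_powerset.1 hT hv, hcond v hv⟩
    rw [this, Finset.sum_powerset_neg_one_pow_card]
    by_cases hcov : ∀ v ∈ J, ∃ e ∈ S, v ∈ e
    · rw [if_pos hcov, if_pos, mul_one]
      rw [hU, Finset.filter_eq_empty_iff]
      intro v hv
      push_neg
      obtain ⟨e, he, hve⟩ := hcov v hv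
      exact ⟨e, he, hve⟩
    · rw [if_neg hcov, if_neg, mul_zero]
      rw [hU, Finset.filter_eq_empty_iff]
      push_neg at hcov ⊢
      obtain ⟨v, hv, h⟩ := hcov
      exact ⟨v, hv, fun e he => h e he⟩
  rw [Finset.sum_congr rfl h1, Finset.sum_comm]
  apply Finset.sum_nbij' (fun T => J \ T) (fun T => J \ T)
  · intro T hT; rw [mem_powerset] at *; exact sdiff_subset
  · intro T hT; rw [mem_powerset] at *; exact sdiff_subset
  · intro T hT; rw [mem_powerset] at hT; exact Finset.sdiff_sdiff_eq_self hT
  · intro T hT; rw [mem_powerset] at hT; exact Finset.sdiff_sdiff_eq_self hT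
  · intro T hT
    rw [mem_powerset] at hT
    set E' := E.filter (fun e => ∀ v ∈ T, v ∉ e) with hE'
    have step : (∑ S ∈ E.powerset, if ∀ v ∈ T, ∀ e ∈ S, v ∉ e then (-1:ℤ) ^ (S.card + T.card) else 0)
        = (-1:ℤ) ^ T.card * ∑ S ∈ E'.powerset, (-1:ℤ) ^ S.card := by
      rw [Finset.mul_sum]
      rw [← Finset.sum_filter_of_ne (s := E.powerset)
        (f := fun S => if ∀ v ∈ T, ∀ e ∈ S, v ∉ e then (-1:ℤ) ^ (S.card + T.card) else 0)
        (p := fun S => S ∈ E'.powerset)]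
      · apply Finset.sum_congr
        · ext S
          simp only [mem_filter, mem_powerset]
          constructor
          · rintro ⟨-, h3⟩; exact h3
          · intro h; exact ⟨h.trans (filter_subset _ _), h⟩
        · intro S hS
          rw [mem_powerset, hE', subset_iff] at hS
          have hcond : ∀ v ∈ T, ∀ e ∈ S, v ∉ e := by
            intro v hv e he
            exact (Finset.mem_filter.1 (hS he)).2 v hv
          rw [if_pos hcond, add_comm, pow_add]
      · intro S hS hne
        have hcond : ∀ v ∈ T, ∀ e ∈ S, v ∉ e := by
          by_contra hc; rw [if_neg hc] at hne; exact hne rfl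
        rw [mem_powerset, hE', subset_iff]
        intro e he
        rw [mem_filter]
        exact ⟨mem_powerset.1 hS he, fun v hv => hcond v hv e he⟩
    rw [step, Finset.sum_powerset_neg_one_pow_card]
    have hsign : (-1:ℤ) ^ T.card = (-1:ℤ) ^ (J \ T).card := by
      have hc : (J \ T).card = 4 - T.card := by rw [card_sdiff_of_subset hT, hJ]
      have hle : T.card ≤ 4 := by rw [← hJ]; exact card_le_card hT
      have h1 : (-1:ℤ) ^ (J \ T).card * (-1:ℤ) ^ T.card = 1 := by
        rw [← pow_add, hc, Nat.sub_add_cancel hle]; norm_num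
      have h2 : (-1:ℤ) ^ T.card * (-1:ℤ) ^ T.card = 1 := by
        rw [← pow_add, ← two_mul]; exact Even.neg_one_pow ⟨T.card, by ring⟩
      calc (-1:ℤ) ^ T.card = ((-1:ℤ) ^ (J \ T).card * (-1:ℤ) ^ T.card) * (-1:ℤ) ^ T.card := by
            rw [h1, one_mul]
        _ = (-1:ℤ) ^ (J \ T).card * ((-1:ℤ) ^ T.card * (-1:ℤ) ^ T.card) := by ring
        _ = (-1:ℤ) ^ (J \ T).card := by rw [h2, mul_one]
    have hcond : (E' = ∅) ↔ (∀ a ∈ J \ T, ∀ b ∈ J \ T, ¬G.Adj a b) := by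
      rw [hE', Finset.filter_eq_empty_iff]
      constructor
      · intro h a ha b hb hab
        have hmem : s(a,b) ∈ E := by
          rw [hE, mem_filter, SimpleGraph.mem_edgeFinset]
          refine ⟨hab, ?_⟩
          intro v hv
          rw [Sym2.mem_iff] at hv
          rcases hv with rfl | rfl
          · exact (mem_sdiff.1 ha).1
          · exact (mem_sdiff.1 hb).1
        have := h hmem
        push_neg at this
        obtain ⟨v, hvT, hve⟩ := this
        rw [Sym2.mem_iff] at hve
        rcases hve with rfl | rfl
        · exact (mem_sdiff.1 ha).2 hvT
        · exact (mem_sdiff.1 hb).2 hvT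
      · intro h e heE
        rw [hE, mem_filter] at heE
        obtain ⟨heG, heJ⟩ := heE
        induction e with
        | _ x y =>
          rw [SimpleGraph.mem_edgeFinset, SimpleGraph.mem_edgeSet] at heG
          intro hcon
          have hx : x ∈ J \ T ∨ x ∈ T := by
            have := heJ x (by simp)
            by_cases h' : x ∈ T
            · exact Or.inr h'
            · exact Or.inl (mem_sdiff.2 ⟨this, h'⟩)
          have hy : y ∈ J \ T ∨ y ∈ T := by
            have := heJ y (by simp)
            by_cases h' : y ∈ T
            · exact Or.inr h'
            · exact Or.inl (mem_sdiff.2 ⟨this, h'⟩)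
          rcases hx with hx | hx
          · rcases hy with hy | hy
            · exact h x hx y hy heG
            · exact hcon y hy (by simp)
          · exact hcon x hx (by simp)
    by_cases hind : ∀ a ∈ J \ T, ∀ b ∈ J \ T, ¬G.Adj a b
    · rw [if_pos hind, if_pos (hcond.2 hind), mul_one, hsign]
    · rw [if_neg hind, if_neg (fun h => hind (hcond.1 h)), mul_zero]

end Aux

section Aux2

variable {V : Type*} [DecidableEq V] {β : Type*} [AddCommMonoid β]

lemma sp1 (d : V) (f : Finset V → β) :
    ∑ T ∈ ({d} : Finset V).powerset, f T = f ∅ + f {d} := by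
  rw [show ({d} : Finset V) = insert d ∅ from rfl,
    Finset.sum_powerset_insert (notMem_empty d)]
  simp

lemma sp2 {c d : V} (hcd : c ≠ d) (f : Finset V → β) :
    ∑ T ∈ ({c, d} : Finset V).powerset, f T = (f ∅ + f {d}) + (f {c} + f {c, d}) := by
  rw [show ({c, d} : Finset V) = insert c {d} from rfl,
    Finset.sum_powerset_insert (by simp [hcd]), sp1, sp1]
  rfl

lemma sp3 {b c d : V} (hbc : b ≠ c) (hbd : b ≠ d) (hcd : c ≠ d) (f : Finset V → β) :
    ∑ T ∈ ({b, c, d} : Finset V).powerset, f T =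
      ((f ∅ + f {d}) + (f {c} + f {c, d})) + ((f {b} + f {b, d}) + (f {b, c} + f {b, c, d})) := by
  rw [show ({b, c, d} : Finset V) = insert b {c, d} from rfl,
    Finset.sum_powerset_insert (by simp [hbc, hbd]), sp2 hcd, sp2 hcd]
  rfl

lemma sp4 {a b c d : V} (hab : a ≠ b) (hac : a ≠ c) (had : a ≠ d) (hbc : b ≠ c)
    (hbd : b ≠ d) (hcd : c ≠ d) (f : Finset V → β) :
    ∑ T ∈ ({a, b, c, d} : Finset V).powerset, f T =
      (((f ∅ + f {d}) + (f {c} + f {c, d})) + ((f {b} + f {b, d}) + (f {b, c} + f {b, c, d}))) +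
      (((f {a} + f {a, d}) + (f {a, c} + f {a, c, d})) +
        ((f {a, b} + f {a, b, d}) + (f {a, b, c} + f {a, b, c, d}))) := by
  rw [show ({a, b, c, d} : Finset V) = insert a {b, c, d} from rfl,
    Finset.sum_powerset_insert (by simp [hab, hac, had]), sp3 hbc hbd hcd, sp3 hbc hbd hcd]
  rfl

variable {W : Type*} [Fintype W] [DecidableEq W] (G : SimpleGraph W) [DecidableRel G.Adj]

lemma card_eq_four' {J : Finset W} (hJ : J.card = 4) :
    ∃ a b c d : W, a ≠ b ∧ a ≠ c ∧ a ≠ d ∧ b ≠ c ∧ b ≠ d ∧ c ≠ d ∧ J = {a, b, c, d} := by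
  obtain ⟨a, ha⟩ : J.Nonempty := by rw [← Finset.card_pos, hJ]; norm_num
  have h3 : (J.erase a).card = 3 := by rw [Finset.card_erase_of_mem ha, hJ]
  obtain ⟨b, c, d, hbc, hbd, hcd, he⟩ := Finset.card_eq_three.mp h3
  have hb : b ∈ J.erase a := by rw [he]; simp
  have hc : c ∈ J.erase a := by rw [he]; simp
  have hd : d ∈ J.erase a := by rw [he]; simp
  refine ⟨a, b, c, d, (Finset.ne_of_mem_erase hb).symm, (Finset.ne_of_mem_erase hc).symm,
    (Finset.ne_of_mem_erase hd).symm, hbc, hbd, hcd, ?_⟩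
  rw [show ({a, b, c, d} : Finset W) = insert a {b, c, d} from rfl, ← he,
    Finset.insert_erase ha]

lemma degH (x u v w : W) (huv : u ≠ v) (huw : u ≠ w) (hvw : v ≠ w)
    (hxu : x ≠ u) (hxv : x ≠ v) (hxw : x ≠ w) :
    (({u, v, w} : Finset W).filter (fun y => G.Adj x y)).card =
      (if G.Adj x u then 1 else 0) + (if G.Adj x v then 1 else 0) +
        (if G.Adj x w then 1 else 0) := by
  by_cases h1 : G.Adj x u <;> by_cases h2 : G.Adj x v <;> by_cases h3 : G.Adj x w <;>
    simp [Finset.filter_insert, Finset.filter_singleton, h1, h2, h3,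
      Finset.card_insert_of_notMem, Finset.mem_insert, Finset.mem_singleton, huv, huw, hvw]

lemma pair_term (x y : W) (hxy : x ≠ y) :
    (if ∀ p ∈ ({x, y} : Finset W), ∀ q ∈ ({x, y} : Finset W), ¬ G.Adj p q
      then (-1 : ℤ) ^ ({x, y} : Finset W).card else 0) = if G.Adj x y then 0 else 1 := by
  by_cases h : G.Adj x y
  · rw [if_pos h, if_neg]
    push_neg
    exact ⟨x, by simp, y, by simp, h⟩
  · rw [if_neg h, if_pos]
    · rw [Finset.card_insert_of_notMem (by simp [hxy]), Finset.card_singleton]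
      norm_num
    · intro p hp q hq
      simp only [Finset.mem_insert, Finset.mem_singleton] at hp hq
      rcases hp with rfl | rfl <;> rcases hq with rfl | rfl
      · exact G.irrefl
      · exact h
      · exact fun hh => h hh.symm
      · exact G.irrefl

lemma triple_term (x y z : W) (hxy : x ≠ y) (hxz : x ≠ z) (hyz : y ≠ z) :
    (if ∀ p ∈ ({x, y, z} : Finset W), ∀ q ∈ ({x, y, z} : Finset W), ¬ G.Adj p q
      then (-1 : ℤ) ^ ({x, y, z} : Finset W).card else 0)
    = if ¬ G.Adj x y ∧ ¬ G.Adj x z ∧ ¬ G.Adj y z then -1 else 0 := by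
  by_cases h : ¬ G.Adj x y ∧ ¬ G.Adj x z ∧ ¬ G.Adj y z
  · rw [if_pos h, if_pos]
    · rw [Finset.card_insert_of_notMem (by simp [hxy, hxz]),
        Finset.card_insert_of_notMem (by simp [hyz]), Finset.card_singleton]
      norm_num
    · intro p hp q hq
      simp only [Finset.mem_insert, Finset.mem_singleton] at hp hq
      obtain ⟨h1, h2, h3⟩ := h
      rcases hp with rfl | rfl | rfl <;> rcases hq with rfl | rfl | rfl
      · exact G.irrefl
      · exact h1
      · exact h2
      · exact fun hh => h1 hh.symm
      · exact G.irrefl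
      · exact h3
      · exact fun hh => h2 hh.symm
      · exact fun hh => h3 hh.symm
      · exact G.irrefl
  · rw [if_neg h, if_neg]
    push_neg at h ⊢
    by_cases h1 : G.Adj x y
    · exact ⟨x, by simp, y, by simp, h1⟩
    by_cases h2 : G.Adj x z
    · exact ⟨x, by simp, z, by simp, h2⟩
    · exact ⟨y, by simp, z, by simp, h h1 h2⟩

lemma quad_term (x y z w : W) (hxy : x ≠ y) (hxz : x ≠ z) (hxw : x ≠ w)
    (hyz : y ≠ z) (hyw : y ≠ w) (hzw : z ≠ w) :
    (if ∀ p ∈ ({x, y, z, w} : Finset W), ∀ q ∈ ({x, y, z, w} : Finset W), ¬ G.Adj p q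
      then (-1 : ℤ) ^ ({x, y, z, w} : Finset W).card else 0)
    = if ¬ G.Adj x y ∧ ¬ G.Adj x z ∧ ¬ G.Adj x w ∧ ¬ G.Adj y z ∧ ¬ G.Adj y w ∧ ¬ G.Adj z w
      then 1 else 0 := by
  by_cases h : ¬ G.Adj x y ∧ ¬ G.Adj x z ∧ ¬ G.Adj x w ∧ ¬ G.Adj y z ∧ ¬ G.Adj y w ∧ ¬ G.Adj z w
  · rw [if_pos h, if_pos]
    · rw [Finset.card_insert_of_notMem (by simp [hxy, hxz, hxw]),
        Finset.card_insert_of_notMem (by simp [hyz, hyw]),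
        Finset.card_insert_of_notMem (by simp [hzw]), Finset.card_singleton]
      norm_num
    · intro p hp q hq
      simp only [Finset.mem_insert, Finset.mem_singleton] at hp hq
      obtain ⟨h1, h2, h3, h4, h5, h6⟩ := h
      rcases hp with rfl | rfl | rfl | rfl <;> rcases hq with rfl | rfl | rfl | rfl
      · exact G.irrefl
      · exact h1
      · exact h2
      · exact h3
      · exact fun hh => h1 hh.symm
      · exact G.irrefl
      · exact h4
      · exact h5
      · exact fun hh => h2 hh.symm
      · exact fun hh => h4 hh.symm
      · exact G.irrefl
      · exact h6
      · exact fun hh => h3 hh.symm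
      · exact fun hh => h5 hh.symm
      · exact fun hh => h6 hh.symm
      · exact G.irrefl
  · rw [if_neg h, if_neg]
    push_neg at h ⊢
    by_cases h1 : G.Adj x y
    · exact ⟨x, by simp, y, by simp, h1⟩
    by_cases h2 : G.Adj x z
    · exact ⟨x, by simp, z, by simp, h2⟩
    by_cases h3 : G.Adj x w
    · exact ⟨x, by simp, w, by simp, h3⟩
    by_cases h4 : G.Adj y z
    · exact ⟨y, by simp, z, by simp, h4⟩
    by_cases h5 : G.Adj y w
    · exact ⟨y, by simp, w, by simp, h5⟩
    · exact ⟨z, by simp, w, by simp, h h1 h2 h3 h4 h5⟩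

lemma empty_term :
    (if ∀ p ∈ (∅ : Finset W), ∀ q ∈ (∅ : Finset W), ¬ G.Adj p q
      then (-1 : ℤ) ^ (∅ : Finset W).card else 0) = 1 := by simp

lemma single_term (x : W) :
    (if ∀ p ∈ ({x} : Finset W), ∀ q ∈ ({x} : Finset W), ¬ G.Adj p q
      then (-1 : ℤ) ^ ({x} : Finset W).card else 0) = -1 := by simp

lemma degH4 (x u v w : W) (huv : u ≠ v) (huw : u ≠ w) (hvw : v ≠ w)
    (hxu : x ≠ u) (hxv : x ≠ v) (hxw : x ≠ w) :
    ((insert x {u, v, w} : Finset W).filter (fun y => G.Adj x y)).card =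
      (if G.Adj x u then 1 else 0) + (if G.Adj x v then 1 else 0) +
        (if G.Adj x w then 1 else 0) := by
  rw [Finset.filter_insert, if_neg (G.irrefl), degH G x u v w huv huw hvw hxu hxv hxw]

set_option maxHeartbeats 2000000 in
lemma keyB (J : Finset W) (hJ : J.card = 4) :
    (∑ T ∈ J.powerset, if ∀ a ∈ T, ∀ b ∈ T, ¬ G.Adj a b then (-1 : ℤ) ^ T.card else 0)
    = -((J.filter fun v => (J.filter fun u => G.Adj v u).card = 3).card : ℤ)
      + (if ∀ v ∈ J, (J.filter fun u => G.Adj v u).card = 1 then 1 else 0)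
      - (if ∀ v ∈ J, (J.filter fun u => G.Adj v u).card = 2 then 1 else 0)
      + (if ∀ v ∈ J, (J.filter fun u => G.Adj v u).card = 3 then 1 else 0) := by
  obtain ⟨a, b, c, d, hab, hac, had, hbc, hbd, hcd, rfl⟩ := card_eq_four' hJ
  have hab' := hab.symm; have hac' := hac.symm; have had' := had.symm
  have hbc' := hbc.symm; have hbd' := hbd.symm; have hcd' := hcd.symm
  have dega : (({a, b, c, d} : Finset W).filter (fun u => G.Adj a u)).card =
      (if G.Adj a b then 1 else 0) + (if G.Adj a c then 1 else 0) +
        (if G.Adj a d then 1 else 0) :=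
    degH4 G a b c d hbc hbd hcd hab hac had
  have degb : (({a, b, c, d} : Finset W).filter (fun u => G.Adj b u)).card =
      (if G.Adj b a then 1 else 0) + (if G.Adj b c then 1 else 0) +
        (if G.Adj b d then 1 else 0) := by
    rw [show ({a, b, c, d} : Finset W) = insert b {a, c, d} from Finset.insert_comm a b {c, d}]
    exact degH4 G b a c d hac had hcd hab' hbc hbd
  have degc : (({a, b, c, d} : Finset W).filter (fun u => G.Adj c u)).card =
      (if G.Adj c a then 1 else 0) + (if G.Adj c b then 1 else 0) +
        (if G.Adj c d then 1 else 0) := by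
    rw [show ({a, b, c, d} : Finset W) = insert c {a, b, d} from by
      rw [show ({a, b, c, d} : Finset W) = insert a (insert b (insert c {d})) from rfl,
        Finset.insert_comm b c, Finset.insert_comm a c]]
    exact degH4 G c a b d hab had hbd hac' hbc' hcd
  have degd : (({a, b, c, d} : Finset W).filter (fun u => G.Adj d u)).card =
      (if G.Adj d a then 1 else 0) + (if G.Adj d b then 1 else 0) +
        (if G.Adj d c then 1 else 0) := by
    rw [show ({a, b, c, d} : Finset W) = insert d {a, b, c} from by
      rw [show ({a, b, c, d} : Finset W) = insert a (insert b (insert c {d})) from rfl,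
        show ({d} : Finset W) = insert d ∅ from rfl,
        Finset.insert_comm c d, Finset.insert_comm b d, Finset.insert_comm a d]; simp]
    exact degH4 G d a b c hab hac hbc had' hbd' hcd'
  rw [sp4 hab hac had hbc hbd hcd]
  rw [empty_term G, single_term G a, single_term G b, single_term G c, single_term G d,
    pair_term G c d hcd, pair_term G b d hbd, pair_term G b c hbc, pair_term G a d had,
    pair_term G a c hac, pair_term G a b hab,
    triple_term G b c d hbc hbd hcd, triple_term G a c d hac had hcd,
    triple_term G a b d hab had hbd, triple_term G a b c hab hac hbc,
    quad_term G a b c d hab hac had hbc hbd hcd]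
  simp only [show ({a, b, c, d} : Finset W) = insert a (insert b (insert c {d})) from rfl,
    Finset.filter_insert, Finset.forall_mem_insert, Finset.filter_singleton,
    Finset.mem_singleton, forall_eq] at *
  simp only [dega, degb, degc, degd]
  by_cases h1 : G.Adj a b <;> by_cases h2 : G.Adj a c <;> by_cases h3 : G.Adj a d <;>
    by_cases h4 : G.Adj b c <;> by_cases h5 : G.Adj b d <;> by_cases h6 : G.Adj c d <;>
    simp_all [show G.Adj b a ↔ G.Adj a b from G.adj_comm b a,
      show G.Adj c a ↔ G.Adj a c from G.adj_comm c a,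
      show G.Adj d a ↔ G.Adj a d from G.adj_comm d a,
      show G.Adj c b ↔ G.Adj b c from G.adj_comm c b,
      show G.Adj d b ↔ G.Adj b d from G.adj_comm d b,
      show G.Adj d c ↔ G.Adj c d from G.adj_comm d c,
      Finset.card_insert_of_notMem, Finset.mem_insert, Finset.mem_singleton]

end Aux2

section Aux3

variable {W : Type*} [Fintype W] [DecidableEq W] (G : SimpleGraph W) [DecidableRel G.Adj]

lemma key_count (v : W) :
    ((((univ : Finset W).powersetCard 4).filter
        (fun J => v ∈ J ∧ (J.filter fun u => G.Adj v u).card = 3)).card)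
      = (G.degree v).choose 3 := by
  rw [← SimpleGraph.card_neighborFinset_eq_degree, ← Finset.card_powersetCard]
  apply Finset.card_bij (fun J _ => J.erase v)
  · intro J hJ
    rw [Finset.mem_filter, Finset.mem_powersetCard] at hJ
    obtain ⟨⟨-, hc4⟩, hv, hd⟩ := hJ
    have hsub : J.filter (fun u => G.Adj v u) ⊆ J.erase v := by
      intro u hu
      rw [Finset.mem_filter] at hu
      exact Finset.mem_erase.2 ⟨fun h => G.irrefl (h ▸ hu.2), hu.1⟩
    have hce : (J.erase v).card = 3 := by rw [Finset.card_erase_of_mem hv, hc4]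
    have heq : J.filter (fun u => G.Adj v u) = J.erase v :=
      Finset.eq_of_subset_of_card_le hsub (by rw [hce, hd])
    rw [Finset.mem_powersetCard]
    constructor
    · intro u hu
      rw [← heq, Finset.mem_filter] at hu
      exact (SimpleGraph.mem_neighborFinset G v u).2 hu.2
    · exact hce
  · intro J1 h1 J2 h2 he
    rw [Finset.mem_filter] at h1 h2
    rw [← Finset.insert_erase h1.2.1, ← Finset.insert_erase h2.2.1, he]
  · intro A hA
    rw [Finset.mem_powersetCard] at hA
    obtain ⟨hAsub, hA3⟩ := hA
    have hvA : v ∉ A := fun h => G.irrefl ((SimpleGraph.mem_neighborFinset G v v).1 (hAsub h))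
    refine ⟨insert v A, ?_, ?_⟩
    · rw [Finset.mem_filter, Finset.mem_powersetCard]
      have hfil : (insert v A).filter (fun u => G.Adj v u) = A := by
        ext u
        rw [Finset.mem_filter, Finset.mem_insert]
        constructor
        · rintro ⟨rfl | hu, hadj⟩
          · exact absurd hadj (G.irrefl)
          · exact hu
        · intro hu
          exact ⟨Or.inr hu, (SimpleGraph.mem_neighborFinset G v u).1 (hAsub hu)⟩
      refine ⟨⟨Finset.subset_univ _, ?_⟩, Finset.mem_insert_self v A, by rw [hfil, hA3]⟩
      rw [Finset.card_insert_of_notMem hvA, hA3]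
    · rw [Finset.erase_insert hvA]

lemma degsum :
    (∑ J ∈ (univ : Finset W).powersetCard 4,
        ((J.filter fun v => (J.filter fun u => G.Adj v u).card = 3).card : ℤ))
      = ∑ v : W, ((G.degree v).choose 3 : ℤ) := by
  have hnat : (∑ J ∈ (univ : Finset W).powersetCard 4,
      (J.filter fun v => (J.filter fun u => G.Adj v u).card = 3).card)
      = ∑ v : W, (G.degree v).choose 3 := by
    calc ∑ J ∈ (univ : Finset W).powersetCard 4,
          (J.filter fun v => (J.filter fun u => G.Adj v u).card = 3).card
        = ∑ J ∈ (univ : Finset W).powersetCard 4, ∑ v ∈ (univ : Finset W),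
            if v ∈ J ∧ (J.filter fun u => G.Adj v u).card = 3 then 1 else 0 := by
          refine Finset.sum_congr rfl fun J _ => ?_
          rw [show J.filter (fun v => (J.filter fun u => G.Adj v u).card = 3)
              = (univ : Finset W).filter
                  (fun v => v ∈ J ∧ (J.filter fun u => G.Adj v u).card = 3) from by
            ext u; simp [Finset.mem_filter]]
          rw [Finset.card_filter]
      _ = ∑ v ∈ (univ : Finset W), ∑ J ∈ (univ : Finset W).powersetCard 4,
            if v ∈ J ∧ (J.filter fun u => G.Adj v u).card = 3 then 1 else 0 :=
          Finset.sum_comm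
      _ = ∑ v ∈ (univ : Finset W),
            (((univ : Finset W).powersetCard 4).filter
              (fun J => v ∈ J ∧ (J.filter fun u => G.Adj v u).card = 3)).card :=
          Finset.sum_congr rfl fun v _ => (Finset.card_filter _ _).symm
      _ = ∑ v : W, (G.degree v).choose 3 :=
          Finset.sum_congr rfl fun v _ => key_count G v
  exact_mod_cast congrArg (Nat.cast : ℕ → ℤ) hnat

end Aux3


/-- For every finite simple graph `G`,
`N_4(G) = −∑_{v ∈ V(G)} C(d(v), 3) + (k₂⊎k₂)(G) − c₄(G) + k₄(G)`, as an identity of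
integers. -/

theorem stmt_2 {V : Type*} [Fintype V] [DecidableEq V] (G : SimpleGraph V) [DecidableRel G.Adj] :
    bigN G 4 = -(∑ v : V, ((G.degree v).choose 3 : ℤ)) + numInducedReg G 4 1
      - numInducedReg G 4 2 + numInducedReg G 4 3 := by
  classical
  rw [bigN, if_neg (by norm_num : ¬(4 = 0))]
  have h1 : ∀ J ∈ (univ : Finset V).powersetCard 4, psi G J =
      -((J.filter fun v => (J.filter fun u => G.Adj v u).card = 3).card : ℤ)
      + (if ∀ v ∈ J, (J.filter fun u => G.Adj v u).card = 1 then 1 else 0)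
      - (if ∀ v ∈ J, (J.filter fun u => G.Adj v u).card = 2 then 1 else 0)
      + (if ∀ v ∈ J, (J.filter fun u => G.Adj v u).card = 3 then 1 else 0) := by
    intro J hJ
    have hc : J.card = 4 := (Finset.mem_powersetCard.1 hJ).2
    rw [show psi G J = ∑ S ∈ (G.edgeFinset.filter fun e => ∀ v ∈ e, v ∈ J).powerset,
        (if ∀ v ∈ J, ∃ e ∈ S, v ∈ e then (-1 : ℤ) ^ S.card else 0) from rfl,
      psi_eq_indep G J hc, keyB G J hc]
  rw [Finset.sum_congr rfl h1, Finset.sum_add_distrib, Finset.sum_sub_distrib,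
    Finset.sum_add_distrib, Finset.sum_neg_distrib, degsum, Finset.sum_boole,
    Finset.sum_boole, Finset.sum_boole]
  simp only [numInducedReg]
end

section
/- For every finite simple graph G with n vertices and m edges, i_4(G) − k_4(G) = C(n,4) − C(n−2,2)·m + (n−3)·(Σ_{v ∈ V(G)} C(d(v),2) − k_3(G)) − Σ_{v ∈ V(G)} C(d(v),3) + (k_2⊎k_2)(G) − c_4(G), where d(v) denotes the degree of v, and the identity is understood in the integers. -/
open Finset

namespace StmtFourAux

set_option linter.unusedSectionVars false

variable {V : Type*} [Fintype V] [DecidableEq V]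

lemma cardSupersets (s : Finset V) (k : ℕ) (hs : s.card ≤ k) :
    (((univ : Finset V).powersetCard k).filter (fun J => s ⊆ J)).card
      = (Fintype.card V - s.card).choose (k - s.card) := by
  have h : (((univ : Finset V).powersetCard k).filter (fun J => s ⊆ J)).card
      = ((sᶜ : Finset V).powersetCard (k - s.card)).card := by
    apply Finset.card_bij' (fun J _ => J \ s) (fun t _ => t ∪ s)
    · intro J hJ
      simp only [mem_filter, mem_powersetCard] at hJ ⊢
      obtain ⟨⟨-, hcard⟩, hsub⟩ := hJ
      constructor
      · intro x hx
        simp only [mem_sdiff] at hx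
        simp [hx.2]
      · rw [card_sdiff_of_subset hsub, hcard]
    · intro t ht
      rw [mem_powersetCard] at ht
      simp only [mem_filter, mem_powersetCard]
      have hdisj : Disjoint t s := by
        intro x hxt hxs
        exact fun y hy => by
          have := ht.1 (hxt hy)
          simp only [mem_compl] at this
          exact absurd (hxs hy) this
      refine ⟨⟨subset_univ _, ?_⟩, subset_union_right⟩
      rw [card_union_of_disjoint hdisj, ht.2]
      omega
    · intro J hJ
      simp only [mem_filter] at hJ
      exact sdiff_union_of_subset hJ.2
    · intro t ht
      rw [mem_powersetCard] at ht
      apply union_sdiff_cancel_right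
      intro x hxt hxs
      exact fun y hy => by
        have := ht.1 (hxt hy); simp only [mem_compl] at this
        exact absurd (hxs hy) this
  rw [h, card_powersetCard, card_compl]

lemma degSumTransfer (G : SimpleGraph V) [DecidableRel G.Adj] (r : ℕ) (hr : r + 1 ≤ 4) :
    (∑ v : V, (G.degree v).choose r) * ((Fintype.card V - (r+1)).choose (4 - (r+1)))
      = ∑ J ∈ (univ : Finset V).powersetCard 4, ∑ v ∈ J,
          ((J.filter fun u => G.Adj v u).card.choose r) := by
  rw [Finset.sum_mul]
  have step1 : ∀ v : V, (G.degree v).choose r * ((Fintype.card V - (r+1)).choose (4 - (r+1)))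
      = ∑ p ∈ (G.neighborFinset v).powersetCard r,
          ∑ J ∈ (univ : Finset V).powersetCard 4, (if insert v p ⊆ J then 1 else 0) := by
    intro v
    have key : ∀ p ∈ (G.neighborFinset v).powersetCard r,
        ∑ J ∈ (univ : Finset V).powersetCard 4, (if insert v p ⊆ J then 1 else 0)
          = (Fintype.card V - (r+1)).choose (4 - (r+1)) := by
      intro p hp
      rw [mem_powersetCard] at hp
      have hv : v ∉ p := by
        intro hvp
        have := hp.1 hvp
        rw [SimpleGraph.mem_neighborFinset] at this
        exact G.irrefl this
      have hcard : (insert v p).card = r + 1 := by rw [card_insert_of_notMem hv, hp.2]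
      rw [Finset.sum_boole]
      have := cardSupersets (insert v p) 4 (by omega)
      rw [hcard] at this
      rw [← this]
      congr 1
    rw [Finset.sum_congr rfl key, Finset.sum_const, card_powersetCard,
      ← SimpleGraph.card_neighborFinset_eq_degree, smul_eq_mul]
  rw [Finset.sum_congr rfl (fun v _ => step1 v)]
  rw [Finset.sum_congr rfl (fun v _ => Finset.sum_comm), Finset.sum_comm]
  apply Finset.sum_congr rfl
  intro J hJ
  have inner : ∀ v : V, ∑ p ∈ (G.neighborFinset v).powersetCard r,
      (if insert v p ⊆ J then (1:ℕ) else 0)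
      = if v ∈ J then ((J.filter fun u => G.Adj v u).card.choose r) else 0 := by
    intro v
    by_cases hv : v ∈ J
    · rw [if_pos hv, Finset.sum_boole]
      have hset : ((G.neighborFinset v).powersetCard r).filter (fun p => insert v p ⊆ J)
          = powersetCard r (J.filter fun u => G.Adj v u) := by
        ext p
        simp only [mem_filter, mem_powersetCard, insert_subset_iff]
        constructor
        · rintro ⟨⟨hpN, hpc⟩, -, hpJ⟩
          refine ⟨fun x hx => mem_filter.2 ⟨hpJ hx, ?_⟩, hpc⟩
          have := hpN hx; rwa [SimpleGraph.mem_neighborFinset] at this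
        · rintro ⟨hpf, hpc⟩
          refine ⟨⟨fun x hx => ?_, hpc⟩, hv, fun x hx => (mem_filter.1 (hpf hx)).1⟩
          rw [SimpleGraph.mem_neighborFinset]
          exact (mem_filter.1 (hpf hx)).2
      rw [hset, card_powersetCard, Nat.cast_id]
    · rw [if_neg hv]
      apply Finset.sum_eq_zero
      intro p hp
      rw [if_neg]
      intro hsub; exact hv (hsub (mem_insert_self v p))
  rw [Finset.sum_congr rfl (fun v _ => inner v), Finset.sum_ite_mem, univ_inter]

lemma triTransfer (G : SimpleGraph V) [DecidableRel G.Adj] :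
    ((((univ : Finset V).powersetCard 3).filter
        (fun T => ∀ v ∈ T, (T.filter fun u => G.Adj v u).card = 2)).card)
      * ((Fintype.card V - 3).choose 1)
    = ∑ J ∈ (univ : Finset V).powersetCard 4,
        ((J.powersetCard 3).filter
          (fun T => ∀ v ∈ T, (T.filter fun u => G.Adj v u).card = 2)).card := by
  set P : Finset V → Prop := fun T => ∀ v ∈ T, (T.filter fun u => G.Adj v u).card = 2 with hP
  have lhs1 : ((((univ : Finset V).powersetCard 3).filter P).card)
      * ((Fintype.card V - 3).choose 1)
      = ∑ T ∈ ((univ : Finset V).powersetCard 3).filter P,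
          ∑ J ∈ (univ : Finset V).powersetCard 4, (if T ⊆ J then 1 else 0) := by
    rw [card_eq_sum_ones, Finset.sum_mul, one_mul]
    apply Finset.sum_congr rfl
    intro T hT
    rw [Finset.sum_boole, Nat.cast_id, cardSupersets T 4 (by
      rw [(mem_powersetCard.1 (mem_filter.1 hT).1).2]; omega)]
    rw [(mem_powersetCard.1 (mem_filter.1 hT).1).2]
  rw [lhs1, Finset.sum_filter]
  have h2 : ∀ T ∈ (univ : Finset V).powersetCard 3,
      (if P T then (∑ J ∈ (univ : Finset V).powersetCard 4, if T ⊆ J then (1:ℕ) else 0) else 0)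
        = ∑ J ∈ (univ : Finset V).powersetCard 4, (if P T ∧ T ⊆ J then 1 else 0) := by
    intro T _
    by_cases h1 : P T
    · rw [if_pos h1, Finset.sum_boole, Nat.cast_id, Finset.sum_boole, Nat.cast_id]
      congr 1
      apply Finset.filter_congr
      intro x _
      constructor
      · exact fun h => ⟨h1, h⟩
      · exact fun h => h.2
    · rw [if_neg h1]
      symm
      apply Finset.sum_eq_zero
      intro J _
      simp [h1]
  rw [Finset.sum_congr rfl h2, Finset.sum_comm]
  apply Finset.sum_congr rfl
  intro J hJ
  rw [Finset.sum_boole, Nat.cast_id]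
  congr 1
  ext T
  simp only [mem_filter, mem_powersetCard, subset_univ, true_and, hP]
  tauto

lemma sum4 {M : Type*} [AddCommMonoid M] (a b c d : V) (hab : a ≠ b) (hac : a ≠ c)
    (had : a ≠ d) (hbc : b ≠ c) (hbd : b ≠ d) (hcd : c ≠ d) (f : V → M) :
    ∑ x ∈ ({a, b, c, d} : Finset V), f x = f a + f b + f c + f d := by
  rw [Finset.sum_insert (by simp [hab, hac, had]), Finset.sum_insert (by simp [hbc, hbd]),
    Finset.sum_insert (by simp [hcd]), Finset.sum_singleton]
  simp [add_assoc]

lemma sum3 {M : Type*} [AddCommMonoid M] (a b c : V) (hab : a ≠ b) (hac : a ≠ c)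
    (hbc : b ≠ c) (f : V → M) :
    ∑ x ∈ ({a, b, c} : Finset V), f x = f a + f b + f c := by
  rw [Finset.sum_insert (by simp [hab, hac]), Finset.sum_insert (by simp [hbc]),
    Finset.sum_singleton]
  simp [add_assoc]

lemma cf3 {p : V → Prop} [DecidablePred p] (a b c : V) (hab : a ≠ b) (hac : a ≠ c)
    (hbc : b ≠ c) :
    (({a, b, c} : Finset V).filter p).card
      = (if p a then 1 else 0) + (if p b then 1 else 0) + (if p c then 1 else 0) := by
  rw [Finset.card_filter, sum3 a b c hab hac hbc]

lemma cf4 {p : V → Prop} [DecidablePred p] (a b c d : V) (hab : a ≠ b) (hac : a ≠ c)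
    (had : a ≠ d) (hbc : b ≠ c) (hbd : b ≠ d) (hcd : c ≠ d) :
    (({a, b, c, d} : Finset V).filter p).card
      = (if p a then 1 else 0) + (if p b then 1 else 0) + (if p c then 1 else 0)
        + (if p d then 1 else 0) := by
  rw [Finset.card_filter, sum4 a b c d hab hac had hbc hbd hcd]

lemma ball_single (d : V) (p : V → Prop) : (∀ x ∈ ({d} : Finset V), p x) ↔ p d := by simp

lemma pow3eq (J : Finset V) (hJ : J.card = 4) :
    J.powersetCard 3 = J.image (J.erase ·) := by
  ext T
  simp only [mem_powersetCard, mem_image]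
  constructor
  · rintro ⟨hsub, hcard⟩
    have h1 : (J \ T).card = 1 := by rw [card_sdiff_of_subset hsub]; omega
    obtain ⟨v, hv⟩ := Finset.card_eq_one.1 h1
    have hvJ : v ∈ J \ T := by rw [hv]; exact mem_singleton_self v
    rw [mem_sdiff] at hvJ
    refine ⟨v, hvJ.1, ?_⟩
    symm
    apply Finset.eq_of_subset_of_card_le
    · intro x hx
      rw [mem_erase]
      exact ⟨fun h => hvJ.2 (h ▸ hx), hsub hx⟩
    · rw [card_erase_of_mem hvJ.1, hJ, hcard]
  · rintro ⟨v, hvJ, rfl⟩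
    exact ⟨erase_subset _ _, by rw [card_erase_of_mem hvJ, hJ]⟩

lemma eraseInj (J : Finset V) : Set.InjOn (J.erase ·) J := by
  intro v hv w hw h
  by_contra hne
  simp only at h
  have h2 : v ∈ J.erase w := by rw [mem_erase]; exact ⟨hne, hv⟩
  rw [← h, mem_erase] at h2
  exact h2.1 rfl

lemma erase_eval (a b c d : V) (h : a ∉ ({b,c,d} : Finset V)) :
    ({a,b,c,d} : Finset V).erase a = {b,c,d} := Finset.erase_insert h

lemma setswap (a b c d : V) : ({a,b,c,d} : Finset V) = {b,a,c,d} := by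
  ext x; simp; tauto

lemma setswap_c (a b c d : V) : ({a,b,c,d} : Finset V) = {c,a,b,d} := by
  ext x; simp; tauto

lemma setswap_d (a b c d : V) : ({a,b,c,d} : Finset V) = {d,a,b,c} := by
  ext x; simp; tauto

set_option maxHeartbeats 2000000 in
lemma pointwise (G : SimpleGraph V) [DecidableRel G.Adj] (J : Finset V) (hJ : J.card = 4) :
    2*(if (∀ u ∈ J, ∀ v ∈ J, ¬ G.Adj u v) then (1:ℤ) else 0)
      - 2*(if (∀ v ∈ J, (J.filter fun u => G.Adj v u).card = 3) then (1:ℤ) else 0)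
    = 2 - (∑ v ∈ J, ((J.filter fun u => G.Adj v u).card : ℤ))
      + 2*(∑ v ∈ J, (((J.filter fun u => G.Adj v u).card.choose 2 : ℕ) : ℤ))
      - 2*(((J.powersetCard 3).filter
            (fun T => ∀ v ∈ T, (T.filter fun u => G.Adj v u).card = 2)).card : ℤ)
      - 2*(∑ v ∈ J, (((J.filter fun u => G.Adj v u).card.choose 3 : ℕ) : ℤ))
      + 2*(if (∀ v ∈ J, (J.filter fun u => G.Adj v u).card = 1) then (1:ℤ) else 0)
      - 2*(if (∀ v ∈ J, (J.filter fun u => G.Adj v u).card = 2) then (1:ℤ) else 0) := by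
  have hJ4 := hJ
  rw [Finset.card_eq_succ] at hJ
  obtain ⟨a, T, haT, rfl, hT3⟩ := hJ
  rw [Finset.card_eq_three] at hT3
  obtain ⟨b, c, d, hbc, hbd, hcd, rfl⟩ := hT3
  have hab : a ≠ b := by rintro rfl; exact haT (by simp)
  have hac : a ≠ c := by rintro rfl; exact haT (by simp)
  have had : a ≠ d := by rintro rfl; exact haT (by simp)
  have e1 : (({a,b,c,d} : Finset V).filter fun u => G.Adj a u).card
      = (if G.Adj a b then 1 else 0) + (if G.Adj a c then 1 else 0)
        + (if G.Adj a d then 1 else 0) := by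
    rw [cf4 a b c d hab hac had hbc hbd hcd]
    simp [G.irrefl]
  have e2 : (({a,b,c,d} : Finset V).filter fun u => G.Adj b u).card
      = (if G.Adj a b then 1 else 0) + (if G.Adj b c then 1 else 0)
        + (if G.Adj b d then 1 else 0) := by
    rw [cf4 a b c d hab hac had hbc hbd hcd]
    simp [G.irrefl, G.adj_comm b a]
  have e3 : (({a,b,c,d} : Finset V).filter fun u => G.Adj c u).card
      = (if G.Adj a c then 1 else 0) + (if G.Adj b c then 1 else 0)
        + (if G.Adj c d then 1 else 0) := by
    rw [cf4 a b c d hab hac had hbc hbd hcd]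
    simp [G.irrefl, G.adj_comm c a, G.adj_comm c b]
  have e4 : (({a,b,c,d} : Finset V).filter fun u => G.Adj d u).card
      = (if G.Adj a d then 1 else 0) + (if G.Adj b d then 1 else 0)
        + (if G.Adj c d then 1 else 0) := by
    rw [cf4 a b c d hab hac had hbc hbd hcd]
    simp [G.irrefl, G.adj_comm d a, G.adj_comm d b, G.adj_comm d c]
  have er_a : ({a,b,c,d} : Finset V).erase a = {b,c,d} := erase_eval a b c d haT
  have er_b : ({a,b,c,d} : Finset V).erase b = {a,c,d} := by
    rw [setswap a b c d]
    exact erase_eval b a c d (by simp [Ne.symm hab, hbc, hbd])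
  have er_c : ({a,b,c,d} : Finset V).erase c = {a,b,d} := by
    rw [setswap_c a b c d]
    exact erase_eval c a b d (by simp [Ne.symm hac, Ne.symm hbc, hcd])
  have er_d : ({a,b,c,d} : Finset V).erase d = {a,b,c} := by
    rw [setswap_d a b c d]
    exact erase_eval d a b c (by simp [Ne.symm had, Ne.symm hbd, Ne.symm hcd])
  have etri : ((({a,b,c,d} : Finset V).powersetCard 3).filter
        (fun T => ∀ v ∈ T, (T.filter fun u => G.Adj v u).card = 2)).card
      = (if (∀ v ∈ ({b,c,d} : Finset V), (({b,c,d} : Finset V).filter fun u => G.Adj v u).card = 2) then 1 else 0)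
        + (if (∀ v ∈ ({a,c,d} : Finset V), (({a,c,d} : Finset V).filter fun u => G.Adj v u).card = 2) then 1 else 0)
        + (if (∀ v ∈ ({a,b,d} : Finset V), (({a,b,d} : Finset V).filter fun u => G.Adj v u).card = 2) then 1 else 0)
        + (if (∀ v ∈ ({a,b,c} : Finset V), (({a,b,c} : Finset V).filter fun u => G.Adj v u).card = 2) then 1 else 0) := by
    rw [pow3eq _ hJ4, Finset.filter_image]
    rw [Finset.card_image_of_injOn (fun x hx y hy h =>
      eraseInj ({a,b,c,d} : Finset V)
        (Finset.mem_coe.2 (Finset.mem_of_mem_filter _ (Finset.mem_coe.1 hx)))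
        (Finset.mem_coe.2 (Finset.mem_of_mem_filter _ (Finset.mem_coe.1 hy))) h)]
    rw [cf4 a b c d hab hac had hbc hbd hcd]
    simp only [er_a, er_b, er_c, er_d]
  rw [sum4 a b c d hab hac had hbc hbd hcd, sum4 a b c d hab hac had hbc hbd hcd,
    sum4 a b c d hab hac had hbc hbd hcd]
  simp only [etri, Finset.forall_mem_insert, ball_single,
    e1, e2, e3, e4, G.irrefl, G.adj_comm b a, G.adj_comm c a, G.adj_comm d a, G.adj_comm c b,
    G.adj_comm d b, G.adj_comm d c, not_false_iff, true_and, and_true]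
  rw [cf3 b c d hbc hbd hcd, cf3 b c d hbc hbd hcd, cf3 b c d hbc hbd hcd,
    cf3 a c d hac had hcd, cf3 a c d hac had hcd, cf3 a c d hac had hcd,
    cf3 a b d hab had hbd, cf3 a b d hab had hbd, cf3 a b d hab had hbd,
    cf3 a b c hab hac hbc, cf3 a b c hab hac hbc, cf3 a b c hab hac hbc]
  simp only [G.irrefl, G.adj_comm b a, G.adj_comm c a, G.adj_comm d a, G.adj_comm c b,
    G.adj_comm d b, G.adj_comm d c]
  by_cases h1 : G.Adj a b <;> by_cases h2 : G.Adj a c <;> by_cases h3 : G.Adj a d <;>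
    by_cases h4 : G.Adj b c <;> by_cases h5 : G.Adj b d <;> by_cases h6 : G.Adj c d <;>
    simp only [h1, h2, h3, h4, h5, h6] <;> decide


end StmtFourAux

open StmtFourAux in
/-- For every finite simple graph `G` with `n` vertices and `m` edges,
`i_4(G) − k_4(G) = C(n,4) − C(n−2,2)·m + (n−3)·(∑_v C(d(v),2) − k_3(G)) − ∑_v C(d(v),3)
  + (k₂⊎k₂)(G) − c_4(G)`, as an identity of integers. -/
theorem stmt_4 {V : Type*} [Fintype V] [DecidableEq V] (G : SimpleGraph V) [DecidableRel G.Adj]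
    (n m : ℕ) (hn : Fintype.card V = n) (hm : G.edgeFinset.card = m) :
    (numIndep G 4 : ℤ) - numInducedReg G 4 3 =
      (n.choose 4 : ℤ) - ((n - 2).choose 2 : ℤ) * m
        + ((n : ℤ) - 3) * ((∑ v : V, ((G.degree v).choose 2 : ℤ)) - numInducedReg G 3 2)
        - (∑ v : V, ((G.degree v).choose 3 : ℤ))
        + numInducedReg G 4 1 - numInducedReg G 4 2 := by
  subst hn hm
  -- replace the (↑n - 3ute) factor by a cast of natural subtraction
  have fix : ((Fintype.card V : ℤ) - 3) *
        ((∑ v : V, ((G.degree v).choose 2 : ℤ)) - numInducedReg G 3 2)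
      = ((Fintype.card V - 3 : ℕ) : ℤ) *
        ((∑ v : V, ((G.degree v).choose 2 : ℤ)) - numInducedReg G 3 2) := by
    rcases le_or_gt 3 (Fintype.card V) with h | h
    · rw [Nat.cast_sub h]; norm_num
    · have hd : ∀ v : V, (G.degree v).choose 2 = 0 := fun v =>
        Nat.choose_eq_zero_of_lt (by have := G.degree_lt_card_verts v; omega)
      have hk3 : numInducedReg G 3 2 = 0 := by
        unfold numInducedReg
        rw [Finset.powersetCard_eq_empty.2 (by simpa using h)]
        simp
      simp [hd, hk3]
  rw [fix]
  have H : ∑ J ∈ (univ : Finset V).powersetCard 4,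
      (2*(if (∀ u ∈ J, ∀ v ∈ J, ¬ G.Adj u v) then (1:ℤ) else 0)
        - 2*(if (∀ v ∈ J, (J.filter fun u => G.Adj v u).card = 3) then (1:ℤ) else 0))
      = ∑ J ∈ (univ : Finset V).powersetCard 4,
      (2 - (∑ v ∈ J, ((J.filter fun u => G.Adj v u).card : ℤ))
      + 2*(∑ v ∈ J, (((J.filter fun u => G.Adj v u).card.choose 2 : ℕ) : ℤ))
      - 2*(((J.powersetCard 3).filter
            (fun T => ∀ v ∈ T, (T.filter fun u => G.Adj v u).card = 2)).card : ℤ)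
      - 2*(∑ v ∈ J, (((J.filter fun u => G.Adj v u).card.choose 3 : ℕ) : ℤ))
      + 2*(if (∀ v ∈ J, (J.filter fun u => G.Adj v u).card = 1) then (1:ℤ) else 0)
      - 2*(if (∀ v ∈ J, (J.filter fun u => G.Adj v u).card = 2) then (1:ℤ) else 0)) :=
    Finset.sum_congr rfl (fun J hJ => pointwise G J (Finset.mem_powersetCard.1 hJ).2)
  simp only [Finset.sum_sub_distrib, Finset.sum_add_distrib, ← Finset.mul_sum,
    Finset.sum_const, Finset.sum_boole, nsmul_eq_mul] at H
  have h0 : ((((univ : Finset V).powersetCard 4).card : ℕ) : ℤ)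
      = (((Fintype.card V).choose 4 : ℕ) : ℤ) := by
    rw [card_powersetCard, card_univ]
  have h1n := degSumTransfer G 1 (by norm_num)
  simp only [Nat.choose_one_right] at h1n
  rw [SimpleGraph.sum_degrees_eq_twice_card_edges] at h1n
  have h1 : (∑ x ∈ (univ : Finset V).powersetCard 4, ∑ v ∈ x,
        (((x.filter fun u => G.Adj v u).card : ℕ) : ℤ))
      = 2 * (G.edgeFinset.card : ℤ) * (((Fintype.card V - 2).choose 2 : ℕ) : ℤ) := by
    exact_mod_cast h1n.symm
  have h2n := degSumTransfer G 2 (by norm_num)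
  norm_num at h2n
  have h2 : (∑ x ∈ (univ : Finset V).powersetCard 4, ∑ v ∈ x,
        (((x.filter fun u => G.Adj v u).card.choose 2 : ℕ) : ℤ))
      = (∑ v : V, (((G.degree v).choose 2 : ℕ) : ℤ)) * (((Fintype.card V - 3 : ℕ)) : ℤ) := by
    exact_mod_cast h2n.symm
  have h3n := degSumTransfer G 3 (by norm_num)
  norm_num at h3n
  have h3 : (∑ x ∈ (univ : Finset V).powersetCard 4, ∑ v ∈ x,
        (((x.filter fun u => G.Adj v u).card.choose 3 : ℕ) : ℤ))
      = ∑ v : V, (((G.degree v).choose 3 : ℕ) : ℤ) := by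
    exact_mod_cast h3n.symm
  have htn := triTransfer G
  simp only [Nat.choose_one_right] at htn
  have ht : (∑ x ∈ (univ : Finset V).powersetCard 4,
        (((x.powersetCard 3).filter
          (fun T => ∀ v ∈ T, (T.filter fun u => G.Adj v u).card = 2)).card : ℤ))
      = ((((univ : Finset V).powersetCard 3).filter
          (fun T => ∀ v ∈ T, (T.filter fun u => G.Adj v u).card = 2)).card : ℤ)
        * ((Fintype.card V - 3 : ℕ) : ℤ) := by
    exact_mod_cast htn.symm
  unfold numIndep numInducedReg
  linarith [H, h0, h1, h2, h3, ht]
end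

section
/- Let n, δ ∈ ℕ and let G be an n-vertex finite simple graph with minimum degree at least δ. If 3n ≥ (δ+1)(δ+2), then for every integer t ≥ 3, i_t(G) ≤ C(n−δ, t) + C(δ, t). -/
/-!
Work in the complement `H = Gᶜ`, whose `t`-cliques are the independent `t`-sets of `G`; the
degree bound becomes `d_H(v) ≤ n - 1 - δ`.  Induct on `δ`.  If some vertex `u` has
`d_H(u) ≤ δ - 1`, delete it: at most `C(δ - 1, t - 1)` cliques contain `u`, and Pascal's rule
turns the induction hypothesis for `H - u` into the claim.  Otherwise all `H`-degrees lie in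
`[δ, n - 1 - δ]`.  Goodman's counting of triangles then gives
`6 #K₃(H) ≤ n(n-1)(n-2) - 3 ∑ d_H(v) d_G(v) ≤ n(n-1)(n-2) - 3nδ(n-1-δ) ≤ 6 C(n-δ, 3)`,
the last step being the hypothesis `3n ≥ (δ+1)(δ+2)`.  Finally, each `t`-clique contains
`C(t, 3)` triangles while a triangle through `u` lies in at most `C(n-δ-3, t-3)` cliques (all
inside the neighbourhood of `u`), so double counting gives `#K_t(H) ≤ C(n-δ, t)`.
-/

open Finset

theorem Finset.card_filter_distinct_triples {α : Type*} [DecidableEq α] (s : Finset α) :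
    #{q ∈ (s ×ˢ s) ×ˢ s | q.1.1 ≠ q.1.2 ∧ q.1.1 ≠ q.2 ∧ q.1.2 ≠ q.2}
      = #s * (#s - 1) * (#s - 2) := by
  rw [card_eq_sum_ones, sum_finset_product _ s.offDiag (fun p => s \ {p.1, p.2}) fun q => by
    simp only [mem_filter, mem_product, mem_offDiag, mem_sdiff, mem_insert, mem_singleton]
    tauto]
  have hfiber : ∀ p ∈ s.offDiag, #(s \ {p.1, p.2}) = #s - 2 := fun p hp => by
    obtain ⟨h1, h2, hne⟩ := mem_offDiag.1 hp
    rw [card_sdiff_of_subset (by simp [insert_subset_iff, h1, h2]), card_pair hne]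
  simp_rw [← card_eq_sum_ones]
  rw [sum_congr rfl hfiber, sum_const, smul_eq_mul, offDiag_card, ← Nat.mul_sub_one]

theorem Nat.six_mul_choose_three_eq (m : ℕ) : (6 * m.choose 3 : ℤ) = m * (m - 1) * (m - 2) := by
  rcases lt_or_ge m 3 with hm | hm
  · interval_cases m <;> simp [Nat.choose_eq_zero_of_lt]
  · obtain ⟨k, rfl⟩ := Nat.exists_eq_add_of_le' hm
    have h := Nat.descFactorial_eq_factorial_mul_choose (k + 3) 3
    simp only [Nat.descFactorial_succ, Nat.descFactorial_zero, Nat.factorial] at h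
    have h' := congrArg (Nat.cast : ℕ → ℤ) h
    push_cast at h' ⊢
    linear_combination -h'

namespace SimpleGraph

variable {V : Type*} [Fintype V]

section Pairs

variable (H : SimpleGraph V) [DecidableRel H.Adj]

theorem sum_adj_fst {M : Type*} [AddCommMonoid M] (f : V → M) :
    ∑ p ∈ {p : V × V | H.Adj p.1 p.2}, f p.1 = ∑ v, H.degree v • f v := by
  rw [sum_finset_product _ univ (fun u => H.neighborFinset u) fun p => by simp]
  simp

theorem sum_adj_snd {M : Type*} [AddCommMonoid M] (f : V → M) :
    ∑ p ∈ {p : V × V | H.Adj p.1 p.2}, f p.2 = ∑ v, H.degree v • f v := by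
  rw [sum_finset_product_right _ univ (fun u => H.neighborFinset u) fun p => by
    simp [H.adj_comm]]
  simp

end Pairs

variable [DecidableEq V]

theorem IsClique.erase_subset_neighborFinset {H : SimpleGraph V} [DecidableRel H.Adj]
    {I : Finset V} (hI : H.IsClique (I : Set V)) {u : V} (hu : u ∈ I) :
    I.erase u ⊆ H.neighborFinset u := fun _ hx =>
  (mem_neighborFinset _ _ _).2 (hI hu (mem_of_mem_erase hx) (ne_of_mem_erase hx).symm)

variable (H : SimpleGraph V) [DecidableRel H.Adj]

theorem degree_add_degree_compl (v : V) : H.degree v + Hᶜ.degree v + 1 = Fintype.card V := by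
  have := H.degree_lt_card_verts v
  rw [degree_compl]
  omega

theorem degree_induce_le (s : Set V) [DecidablePred (· ∈ s)] (v : s) :
    (H.induce s).degree v ≤ H.degree v := by
  rw [← card_neighborFinset_eq_degree, ← card_map (.subtype (· ∈ s)),
    map_neighborFinset_induce]
  exact (card_le_card inter_subset_left).trans_eq (card_neighborFinset_eq_degree _ _)

theorem numIndep_eq_card_cliqueFinset_compl (t : ℕ) : numIndep H t = #(Hᶜ.cliqueFinset t) := by
  simp only [numIndep, cliqueFinset, isNClique_iff, isClique_iff, Set.Pairwise, compl_adj,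
    mem_coe]
  congr 1
  ext s
  simp only [mem_filter, mem_powersetCard, subset_univ, true_and, mem_univ]
  constructor
  · exact fun ⟨hcard, hs⟩ => ⟨fun u hu v hv hne => ⟨hne, hs u hu v hv⟩, hcard⟩
  · exact fun ⟨hs, hcard⟩ => ⟨hcard, fun u hu v hv hadj => (hs hu hv hadj.ne).2 hadj⟩

def orderedTriangles : Finset ((V × V) × V) :=
  {q | H.Adj q.1.1 q.1.2 ∧ H.Adj q.1.1 q.2 ∧ H.Adj q.1.2 q.2}

theorem card_orderedTriangles : #H.orderedTriangles = 6 * #(H.cliqueFinset 3) := by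
  rw [card_eq_sum_card_fiberwise (f := fun q => {q.1.1, q.1.2, q.2}) (t := H.cliqueFinset 3)
    fun q hq => by simpa [orderedTriangles, is3Clique_triple_iff] using hq]
  rw [mul_comm, ← smul_eq_mul, ← sum_const]
  refine sum_congr rfl fun s hs => ?_
  have hs := mem_cliqueFinset_iff.1 hs
  have hfiber : {q ∈ H.orderedTriangles | ({q.1.1, q.1.2, q.2} : Finset V) = s}
      = {q ∈ (s ×ˢ s) ×ˢ s | q.1.1 ≠ q.1.2 ∧ q.1.1 ≠ q.2 ∧ q.1.2 ≠ q.2} := by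
    ext ⟨⟨a, b⟩, c⟩
    simp only [orderedTriangles, mem_filter, mem_univ, true_and, mem_product]
    constructor
    · rintro ⟨⟨hab, hac, hbc⟩, rfl⟩
      simp [hab.ne, hac.ne, hbc.ne]
    · rintro ⟨⟨⟨ha, hb⟩, hc⟩, hab, hac, hbc⟩
      refine ⟨⟨hs.1 ha hb hab, hs.1 ha hc hac, hs.1 hb hc hbc⟩,
        eq_of_subset_of_card_le ?_ ?_⟩
      · simp [insert_subset_iff, ha, hb, hc]
      · rw [hs.2, card_eq_three.2 ⟨a, b, c, hab, hac, hbc, rfl⟩]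
  rw [hfiber, card_filter_distinct_triples, hs.2]

theorem card_orderedTriangles_eq_sum :
    #H.orderedTriangles = ∑ p ∈ {p : V × V | H.Adj p.1 p.2},
      #(H.neighborFinset p.1 ∩ H.neighborFinset p.2) := by
  rw [card_eq_sum_ones, sum_finset_product _ {p : V × V | H.Adj p.1 p.2}
    (fun p => H.neighborFinset p.1 ∩ H.neighborFinset p.2) fun q => by simp [orderedTriangles]]
  simp_rw [← card_eq_sum_ones]

theorem card_inter_neighborFinset_add_card_le {u v : V} (h : H.Adj u v) :
    #(H.neighborFinset u ∩ H.neighborFinset v) + Fintype.card V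
      ≤ H.degree u + H.degree v + #(Hᶜ.neighborFinset u ∩ Hᶜ.neighborFinset v) := by
  have hcover : univ ⊆ (H.neighborFinset u ∪ H.neighborFinset v)
      ∪ (Hᶜ.neighborFinset u ∩ Hᶜ.neighborFinset v) := by
    intro x _
    simp only [mem_union, mem_inter, mem_neighborFinset, compl_adj]
    by_cases hxu : x = u
    · exact Or.inl (Or.inr (hxu ▸ h.symm))
    by_cases hxv : x = v
    · exact Or.inl (Or.inl (hxv ▸ h))
    tauto
  have hunion := card_union_add_card_inter (H.neighborFinset u) (H.neighborFinset v)
  have hle := (card_le_card hcover).trans (card_union_le _ _)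
  rw [card_univ] at hle
  simp only [card_neighborFinset_eq_degree] at hunion
  omega

/-- Each pair counted on the left is a pair of distinct `Hᶜ`-neighbours of the common vertex. -/
theorem sum_card_inter_compl_neighborFinset_le :
    ∑ p ∈ {p : V × V | H.Adj p.1 p.2}, #(Hᶜ.neighborFinset p.1 ∩ Hᶜ.neighborFinset p.2)
      ≤ ∑ x, #(Hᶜ.neighborFinset x).offDiag := by
  have := sum_card_bipartiteAbove_eq_sum_card_bipartiteBelow
    (fun p x => x ∈ Hᶜ.neighborFinset p.1 ∩ Hᶜ.neighborFinset p.2)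
    (s := {p : V × V | H.Adj p.1 p.2}) (t := univ)
  simp only [bipartiteAbove, filter_mem_eq_inter, univ_inter] at this
  rw [this]
  refine sum_le_sum fun x _ => card_le_card fun p hp => ?_
  simp only [bipartiteBelow, mem_filter, mem_univ, true_and, mem_inter, mem_neighborFinset] at hp
  obtain ⟨hadj, hx1, hx2⟩ := hp
  exact mem_offDiag.2
    ⟨(mem_neighborFinset _ _ _).2 hx1.symm, (mem_neighborFinset _ _ _).2 hx2.symm, hadj.ne⟩

theorem card_orderedTriangles_add_le :
    #H.orderedTriangles + Fintype.card V * ∑ v, H.degree v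
      ≤ 2 * ∑ v, H.degree v * H.degree v + ∑ v, #(Hᶜ.neighborFinset v).offDiag := by
  calc #H.orderedTriangles + Fintype.card V * ∑ v, H.degree v
      = ∑ p ∈ {p : V × V | H.Adj p.1 p.2},
          (#(H.neighborFinset p.1 ∩ H.neighborFinset p.2) + Fintype.card V) := by
        rw [sum_add_distrib, card_orderedTriangles_eq_sum, sum_adj_fst H fun _ => Fintype.card V,
          ← sum_smul, smul_eq_mul, mul_comm]
    _ ≤ ∑ p ∈ {p : V × V | H.Adj p.1 p.2}, (H.degree p.1 + H.degree p.2
          + #(Hᶜ.neighborFinset p.1 ∩ Hᶜ.neighborFinset p.2)) :=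
        sum_le_sum fun p hp => H.card_inter_neighborFinset_add_card_le (mem_filter.1 hp).2
    _ ≤ _ := by
        rw [sum_add_distrib, sum_add_distrib, sum_adj_fst H fun v => H.degree v,
          sum_adj_snd H fun v => H.degree v, two_mul]
        simp only [smul_eq_mul]
        gcongr
        exact H.sum_card_inter_compl_neighborFinset_le

theorem six_mul_card_cliqueFinset_three_add_le :
    6 * (#(H.cliqueFinset 3) : ℤ) + 3 * ∑ v, (H.degree v : ℤ) * Hᶜ.degree v
      ≤ Fintype.card V * (Fintype.card V - 1) * (Fintype.card V - 2) := by
  have hcount := H.card_orderedTriangles_add_le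
  rw [card_orderedTriangles] at hcount
  have hoff (v : V) :
      (#(Hᶜ.neighborFinset v).offDiag : ℤ) = Hᶜ.degree v * (Hᶜ.degree v - 1) := by
    rw [offDiag_card, card_neighborFinset_eq_degree, Nat.cast_sub (Nat.le_mul_self _)]
    push_cast
    ring
  have hvertex (v : V) :
      2 * ((H.degree v : ℤ) * H.degree v) + Hᶜ.degree v * (Hᶜ.degree v - 1)
        + 3 * (H.degree v * Hᶜ.degree v)
      = (Fintype.card V - 1) * (Fintype.card V - 2) + Fintype.card V * H.degree v := by
    rw [← H.degree_add_degree_compl v]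
    push_cast
    ring
  have hsum := sum_congr rfl fun v (_ : v ∈ univ) => hvertex v
  simp only [sum_add_distrib, ← mul_sum, sum_const, card_univ, nsmul_eq_mul] at hsum
  zify at hcount
  simp only [hoff] at hcount
  linarith

theorem card_cliqueFinset_three_le {δ : ℕ} (hlo : ∀ v, δ ≤ H.degree v)
    (hhi : ∀ v, H.degree v + δ + 1 ≤ Fintype.card V)
    (hcond : (δ + 1) * (δ + 2) ≤ 3 * Fintype.card V) :
    #(H.cliqueFinset 3) ≤ (Fintype.card V - δ).choose 3 := by
  rcases isEmpty_or_nonempty V with hV | ⟨⟨v₀⟩⟩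
  · simpa using H.card_cliqueFinset_le (n := 3)
  have hδn : δ ≤ Fintype.card V := by have := hhi v₀; omega
  have hprod (v : V) : (δ : ℤ) * (Fintype.card V - 1 - δ) ≤ H.degree v * Hᶜ.degree v := by
    have hv := H.degree_add_degree_compl v
    have hlo := hlo v
    have hhi := hhi v
    zify at hv hlo hhi
    nlinarith [mul_nonneg (sub_nonneg.2 hlo) (show (0 : ℤ) ≤ Hᶜ.degree v - δ by linarith)]
  have hsum := sum_le_sum fun v (_ : v ∈ univ) => hprod v
  rw [sum_const, card_univ, nsmul_eq_mul] at hsum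
  have hchoose := Nat.six_mul_choose_three_eq (Fintype.card V - δ)
  rw [Nat.cast_sub hδn] at hchoose
  have hcond : ((δ : ℤ) + 1) * (δ + 2) ≤ 3 * Fintype.card V := by exact_mod_cast hcond
  have := H.six_mul_card_cliqueFinset_three_add_le
  -- `(n-δ)(n-δ-1)(n-δ-2) - (n(n-1)(n-2) - 3nδ(n-1-δ)) = δ(3n - (δ+1)(δ+2))`
  have : (6 * #(H.cliqueFinset 3) : ℤ) ≤ 6 * (Fintype.card V - δ).choose 3 := by
    nlinarith [mul_nonneg (Int.natCast_nonneg δ) (sub_nonneg.2 hcond)]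
  omega

theorem card_cliqueFinset_mul_choose_le {s t m : ℕ} (hs : 0 < s)
    (hdeg : ∀ v, H.degree v < m) :
    #(H.cliqueFinset t) * t.choose s ≤ #(H.cliqueFinset s) * (m - s).choose (t - s) := by
  refine card_mul_le_card_mul (fun I S => S ⊆ I) (fun I hI => ?_) (fun S hS => ?_)
  · have hI := mem_cliqueFinset_iff.1 hI
    calc t.choose s = #(I.powersetCard s) := by rw [card_powersetCard, hI.2]
      _ ≤ _ := card_le_card fun S hS => by
        obtain ⟨hSI, hcard⟩ := mem_powersetCard.1 hS
        exact (mem_bipartiteAbove _).2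
          ⟨mem_cliqueFinset_iff.2 ⟨hI.1.subset hSI, hcard⟩, hSI⟩
  · have hS := mem_cliqueFinset_iff.1 hS
    obtain ⟨u, hu⟩ : S.Nonempty := card_pos.1 (hS.2 ▸ hs)
    calc #(bipartiteBelow (fun I S => S ⊆ I) (H.cliqueFinset t) S)
        ≤ #((H.neighborFinset u \ S.erase u).powersetCard (t - s)) := by
          refine card_le_card_of_injOn (· \ S) (fun I hI => ?_) fun I hI J hJ hIJ => ?_
          · obtain ⟨hIt, hSI⟩ := (mem_bipartiteBelow _).1 hI
            have hIt := mem_cliqueFinset_iff.1 hIt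
            refine mem_powersetCard.2 ⟨fun x hx => ?_, ?_⟩
            · obtain ⟨hxI, hxS⟩ := mem_sdiff.1 hx
              have hxu : x ≠ u := fun h => hxS (h ▸ hu)
              exact mem_sdiff.2
                ⟨hIt.1.erase_subset_neighborFinset (hSI hu) (mem_erase.2 ⟨hxu, hxI⟩),
                  fun h => hxS (mem_of_mem_erase h)⟩
            · rw [card_sdiff_of_subset hSI, hIt.2, hS.2]
          · have hSI := ((mem_bipartiteBelow _).1 hI).2
            have hSJ := ((mem_bipartiteBelow _).1 hJ).2
            simpa [sdiff_union_of_subset hSI, sdiff_union_of_subset hSJ] using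
              congrArg (· ∪ S) hIJ
      _ ≤ (m - s).choose (t - s) := by
          rw [card_powersetCard, card_sdiff_of_subset (hS.1.erase_subset_neighborFinset hu),
            card_erase_of_mem hu, card_neighborFinset_eq_degree, hS.2]
          exact Nat.choose_le_choose _ (by have := hdeg u; omega)

theorem card_cliqueFinset_le_choose {δ t : ℕ} (hlo : ∀ v, δ ≤ H.degree v)
    (hhi : ∀ v, H.degree v + δ + 1 ≤ Fintype.card V)
    (hcond : (δ + 1) * (δ + 2) ≤ 3 * Fintype.card V) (ht : 3 ≤ t) :
    #(H.cliqueFinset t) ≤ (Fintype.card V - δ).choose t := by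
  refine Nat.le_of_mul_le_mul_right ?_ (Nat.choose_pos ht)
  calc #(H.cliqueFinset t) * t.choose 3
      ≤ #(H.cliqueFinset 3) * (Fintype.card V - δ - 3).choose (t - 3) :=
        H.card_cliqueFinset_mul_choose_le three_pos fun v => by have := hhi v; omega
    _ ≤ (Fintype.card V - δ).choose 3 * (Fintype.card V - δ - 3).choose (t - 3) := by
        gcongr
        exact H.card_cliqueFinset_three_le hlo hhi hcond
    _ = (Fintype.card V - δ).choose t * t.choose 3 := (Nat.choose_mul ht).symm

theorem card_cliqueFinset_succ_le (u : V) (t : ℕ) :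
    #(H.cliqueFinset (t + 1))
      ≤ (H.degree u).choose t + #((H.induce {u}ᶜ).cliqueFinset (t + 1)) := by
  rw [← card_filter_add_card_filter_not (p := (u ∈ ·))]
  gcongr
  · calc #{I ∈ H.cliqueFinset (t + 1) | u ∈ I}
        ≤ #(((H.neighborFinset u).powersetCard t).image (insert u)) := by
          refine card_le_card fun I hI => ?_
          obtain ⟨hI, hu⟩ := mem_filter.1 hI
          have hI := mem_cliqueFinset_iff.1 hI
          refine mem_image.2 ⟨I.erase u,
            mem_powersetCard.2 ⟨hI.1.erase_subset_neighborFinset hu, ?_⟩, insert_erase hu⟩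
          rw [card_erase_of_mem hu, hI.2, Nat.add_sub_cancel]
      _ ≤ (H.degree u).choose t := by
          rw [← card_neighborFinset_eq_degree, ← card_powersetCard]
          exact card_image_le
  · calc #{I ∈ H.cliqueFinset (t + 1) | u ∉ I}
        ≤ #(((H.induce {u}ᶜ).cliqueFinset (t + 1)).map
            (mapEmbedding (.subtype (· ∈ ({u}ᶜ : Set V)))).toEmbedding) := by
          refine card_le_card fun I hI => ?_
          obtain ⟨hI, hu⟩ := mem_filter.1 hI
          have hmem : ∀ x ∈ I, x ∈ ({u}ᶜ : Set V) := fun x hx hxu => hu (hxu ▸ hx)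
          refine mem_map.2 ⟨I.subtype (· ∈ ({u}ᶜ : Set V)), ?_, ?_⟩
          · rwa [mem_cliqueFinset_iff, isNClique_induce_iff, subtype_map_of_mem hmem,
              ← mem_cliqueFinset_iff]
          · simp [subtype_map_of_mem hmem]
      _ = _ := card_map _

end SimpleGraph

theorem SimpleGraph.card_cliqueFinset_le_choose_add_choose (δ : ℕ) {V : Type*} [Fintype V]
    [DecidableEq V] (H : SimpleGraph V) [DecidableRel H.Adj] {t : ℕ}
    (hdeg : ∀ v, H.degree v + δ + 1 ≤ Fintype.card V)
    (hcond : (δ + 1) * (δ + 2) ≤ 3 * Fintype.card V) (ht : 3 ≤ t) :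
    #(H.cliqueFinset t) ≤ (Fintype.card V - δ).choose t + δ.choose t := by
  induction δ generalizing V with
  | zero => simpa [Nat.choose_eq_zero_of_lt (by omega : 0 < t)] using H.card_cliqueFinset_le
  | succ δ ih =>
    by_cases hlow : ∃ u, H.degree u ≤ δ
    · obtain ⟨u, hu⟩ := hlow
      obtain ⟨t, rfl⟩ : ∃ t', t = t' + 1 := ⟨t - 1, by omega⟩
      have hcard : Fintype.card ({u}ᶜ : Set V) = Fintype.card V - 1 := by
        rw [Fintype.card_compl_set]
        simp
      have hdeg' : ∀ v, (H.induce {u}ᶜ).degree v + δ + 1 ≤ Fintype.card ({u}ᶜ : Set V) :=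
        fun v => by have := H.degree_induce_le _ v; have := hdeg v; omega
      have hcond' : (δ + 1) * (δ + 2) ≤ 3 * Fintype.card ({u}ᶜ : Set V) := by
        rw [hcard]
        have : (δ + 1) * (δ + 2) + 3 ≤ (δ + 1 + 1) * (δ + 1 + 2) := by nlinarith
        omega
      have hrest := ih (H.induce {u}ᶜ) hdeg' hcond'
      rw [hcard, show Fintype.card V - 1 - δ = Fintype.card V - (δ + 1) by omega] at hrest
      calc #(H.cliqueFinset (t + 1))
          ≤ (H.degree u).choose t + #((H.induce {u}ᶜ).cliqueFinset (t + 1)) :=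
            H.card_cliqueFinset_succ_le u t
        _ ≤ δ.choose t + ((Fintype.card V - (δ + 1)).choose (t + 1) + δ.choose (t + 1)) :=
            add_le_add (Nat.choose_le_choose _ hu) hrest
        _ = _ := by rw [Nat.choose_succ_succ']; ring
    · push Not at hlow
      exact (H.card_cliqueFinset_le_choose hlow hdeg hcond ht).trans le_self_add

/-- Let `n, δ ∈ ℕ` and let `G` be an `n`-vertex finite simple graph with minimum degree at
least `δ`.  If `3n ≥ (δ+1)(δ+2)`, then for every integer `t ≥ 3`,
`i_t(G) ≤ C(n−δ, t) + C(δ, t)` (the right-hand side being `i_t(K_{δ,n−δ})`). -/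
theorem stmt_8 {V : Type*} [Fintype V] [DecidableEq V] (G : SimpleGraph V) [DecidableRel G.Adj]
    (n δ : ℕ) (hn : Fintype.card V = n) (hδ : ∀ v : V, δ ≤ G.degree v)
    (hcond : (δ + 1) * (δ + 2) ≤ 3 * n) (t : ℕ) (ht : 3 ≤ t) :
    numIndep G t ≤ (n - δ).choose t + δ.choose t := by
  subst hn
  rw [G.numIndep_eq_card_cliqueFinset_compl]
  refine Gᶜ.card_cliqueFinset_le_choose_add_choose δ (fun v => ?_) hcond ht
  have := G.degree_add_degree_compl v
  have := hδ v
  omega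
end

section
/- Let n, δ ∈ ℕ and let G be an n-vertex finite simple graph in which every vertex v satisfies δ ≤ d(v) ≤ n − δ − 1. If 3n ≥ (δ+1)(δ+2), then for every integer t ≥ 3, i_t(G) ≤ C(n−δ, t). -/
/-!
Goodman's counting argument bounds `i_3`: call a vertex `v` of a 3-set `S` bichromatic if `S`
contains both a neighbour and a non-neighbour of `v`. Then `v` is bichromatic in at least
`d(v)(n-1-d(v))` 3-sets, an independent 3-set has no bichromatic vertex and every 3-set has at
most two, so `∑ d(v)(n-1-d(v)) + 2 i_3 ≤ 2 C(n,3)`. The degree bounds give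
`d(v)(n-1-d(v)) ≥ δ(n-1-δ)`, and `3n ≥ (δ+1)(δ+2)` is exactly what makes
`2 C(n,3) - nδ(n-1-δ) ≤ 2 C(n-δ,3)`.

For `t ≥ 3` double count pairs `T ⊆ S` of an independent 3-set inside an independent `t`-set:
if `u ∈ T` then `S \ T` avoids `T ∪ N(u)`, a set of at least `3 + δ` vertices, so
`i_t C(t,3) ≤ i_3 C(n-δ-3, t-3) ≤ C(n-δ,3) C(n-δ-3, t-3) = C(n-δ,t) C(t,3)`.
-/

open Finset

theorem Nat.cast_six_mul_choose_three (m : ℕ) : 6 * (m.choose 3 : ℤ) = m * (m - 1) * (m - 2) := by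
  match m with
  | 0 | 1 | 2 => rfl
  | m + 3 =>
    have h := congrArg (Nat.cast : ℕ → ℤ) (Nat.descFactorial_eq_factorial_mul_choose (m + 3) 3)
    simp only [Nat.descFactorial, Nat.factorial] at h
    push_cast at h ⊢
    linarith

theorem two_mul_choose_three_le {n δ : ℕ} (hδn : δ < n) (hcond : (δ + 1) * (δ + 2) ≤ 3 * n) :
    2 * n.choose 3 ≤ 2 * (n - δ).choose 3 + n * (δ * (n - 1 - δ)) := by
  -- the slack is `δ (3n - (δ+1)(δ+2)) / 3`
  zify [hδn.le, show δ ≤ n - 1 by omega, show 1 ≤ n by omega] at hcond ⊢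
  have h₁ := Nat.cast_six_mul_choose_three n
  have h₂ := Nat.cast_six_mul_choose_three (n - δ)
  push_cast [hδn.le] at h₂
  nlinarith [mul_nonneg (Int.natCast_nonneg δ) (sub_nonneg.2 hcond)]

namespace SimpleGraph

variable {V : Type*} [Fintype V] [DecidableEq V] (G : SimpleGraph V) [DecidableRel G.Adj]

theorem numIndep_eq_card_indepSetFinset (t : ℕ) : numIndep G t = #(G.indepSetFinset t) := by
  unfold numIndep indepSetFinset
  congr 1
  ext s
  simp only [mem_filter, mem_powersetCard, subset_univ, true_and, mem_univ, isNIndepSet_iff,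
    IsIndepSet, Set.Pairwise, mem_coe]
  constructor
  · exact fun ⟨hs, h⟩ => ⟨fun u hu v hv _ => h u hu v hv, hs⟩
  · exact fun ⟨h, hs⟩ => ⟨hs, fun u hu v hv huv => h hu hv (G.ne_of_adj huv) huv⟩

def IsBichromaticAt (S : Finset V) (v : V) : Prop :=
  v ∈ S ∧ ∃ a ∈ S, ∃ b ∈ S, G.Adj v a ∧ Gᶜ.Adj v b

instance (S : Finset V) : DecidablePred (G.IsBichromaticAt S) :=
  fun _ => inferInstanceAs (Decidable (_ ∧ _))

theorem degree_mul_degree_compl_le_card_isBichromaticAt (v : V) :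
    G.degree v * Gᶜ.degree v ≤ #{S ∈ univ.powersetCard 3 | G.IsBichromaticAt S v} := by
  rw [← card_neighborFinset_eq_degree, ← card_neighborFinset_eq_degree, ← card_product]
  refine card_le_card_of_injOn (fun p => {v, p.1, p.2}) ?_ ?_
  · rintro ⟨a, b⟩ hab
    simp only [coe_product, Set.mem_prod, mem_coe, mem_neighborFinset] at hab
    obtain ⟨ha, hb⟩ := hab
    have hab : a ≠ b := by rintro rfl; exact ((compl_adj G v a).1 hb).2 ha
    simp only [mem_coe, mem_filter, mem_powersetCard, subset_univ, true_and]
    refine ⟨card_eq_three.2 ⟨v, a, b, G.ne_of_adj ha, Gᶜ.ne_of_adj hb, hab, rfl⟩,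
      mem_insert_self _ _, a, by simp, b, by simp, ha, hb⟩
  · rintro ⟨a, b⟩ hab ⟨a', b'⟩ hab' h
    simp only [coe_product, Set.mem_prod, mem_coe, mem_neighborFinset, compl_adj] at hab hab' h
    have ha' : a' ∈ ({v, a, b} : Finset V) := by rw [h]; simp
    have hb' : b' ∈ ({v, a, b} : Finset V) := by rw [h]; simp
    simp only [mem_insert, mem_singleton] at ha' hb'
    grind [G.ne_of_adj]

theorem card_isBichromaticAt_le_two {S : Finset V} (hS : #S = 3) :
    #{v | G.IsBichromaticAt S v} ≤ 2 := by
  obtain ⟨x, y, z, hxy, hxz, hyz, rfl⟩ := card_eq_three.1 hS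
  by_contra! h
  have hall : ∀ v ∈ ({x, y, z} : Finset V), G.IsBichromaticAt {x, y, z} v := by
    have hsub : ({v | G.IsBichromaticAt {x, y, z} v} : Finset V) ⊆ {x, y, z} :=
      fun v hv => (mem_filter.1 hv).2.1
    have := eq_of_subset_of_card_le hsub (by omega)
    intro v hv
    rw [← this] at hv
    exact (mem_filter.1 hv).2
  have hxor : (G.Adj x y ∧ ¬G.Adj x z ∨ G.Adj x z ∧ ¬G.Adj x y) ∧
      (G.Adj x y ∧ ¬G.Adj y z ∨ G.Adj y z ∧ ¬G.Adj x y) ∧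
      (G.Adj x z ∧ ¬G.Adj y z ∨ G.Adj y z ∧ ¬G.Adj x z) := by
    simpa [IsBichromaticAt, hxy, hxz, hyz, hxy.symm, hxz.symm, hyz.symm, G.adj_comm y x,
      G.adj_comm z x, G.adj_comm z y] using hall
  tauto

theorem card_isBichromaticAt_eq_zero {S : Finset V} (hS : G.IsIndepSet S) :
    #{v | G.IsBichromaticAt S v} = 0 := by
  rw [card_eq_zero, filter_eq_empty_iff]
  rintro v - ⟨hv, a, ha, -, -, hva, -⟩
  exact hS hv ha (G.ne_of_adj hva) hva

theorem sum_degree_mul_degree_compl_add_two_mul_numIndep_three_le :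
    ∑ v, G.degree v * Gᶜ.degree v + 2 * numIndep G 3 ≤ 2 * (Fintype.card V).choose 3 := by
  set P := (univ : Finset V).powersetCard 3
  set I := G.indepSetFinset 3
  have hIP : I ⊆ P := fun S hS => by
    simpa [P] using (mem_indepSetFinset_iff.1 hS).card_eq
  calc ∑ v, G.degree v * Gᶜ.degree v + 2 * numIndep G 3
      ≤ ∑ v, #{S ∈ P | G.IsBichromaticAt S v} + 2 * #I := by
        rw [numIndep_eq_card_indepSetFinset]
        gcongr with v
        exact G.degree_mul_degree_compl_le_card_isBichromaticAt v
    _ = ∑ S ∈ P \ I, #{v | G.IsBichromaticAt S v} + 2 * #I := by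
        have swap := sum_card_bipartiteAbove_eq_sum_card_bipartiteBelow (s := univ) (t := P)
          (r := fun v S => G.IsBichromaticAt S v)
        simp only [bipartiteAbove, bipartiteBelow] at swap
        rw [swap]
        congr 1
        refine (sum_subset sdiff_subset fun S hSP hS => ?_).symm
        have hSI : S ∈ I := by simpa [hSP] using hS
        exact G.card_isBichromaticAt_eq_zero (mem_indepSetFinset_iff.1 hSI).isIndepSet
    _ ≤ 2 * #(P \ I) + 2 * #I := by
        gcongr
        rw [mul_comm, ← smul_eq_mul, ← sum_const]
        exact sum_le_sum fun S hS => G.card_isBichromaticAt_le_two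
          (mem_powersetCard.1 (mem_sdiff.1 hS).1).2
    _ = 2 * (Fintype.card V).choose 3 := by
        rw [← mul_add, card_sdiff_add_card_eq_card hIP, card_powersetCard, card_univ]

theorem card_indepSetFinset_superset_le {T : Finset V} (hT : G.IsIndepSet T) {u : V} (hu : u ∈ T)
    (t : ℕ) :
    #{S ∈ G.indepSetFinset t | T ⊆ S} ≤ (Fintype.card V - #T - G.degree u).choose (t - #T) := by
  have hdisj : Disjoint T (G.neighborFinset u) := Finset.disjoint_left.2 fun z hz hzu => by
    rw [mem_neighborFinset] at hzu
    exact hT hu hz (G.ne_of_adj hzu) hzu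
  have hcard : #(univ \ (T ∪ G.neighborFinset u)) = Fintype.card V - #T - G.degree u := by
    rw [card_sdiff_of_subset (subset_univ _), card_union_of_disjoint hdisj, card_univ,
      card_neighborFinset_eq_degree, Nat.sub_sub]
  rw [← hcard, ← card_powersetCard]
  refine card_le_card_of_injOn (· \ T) (fun S hS => ?_) (fun S₁ hS₁ S₂ hS₂ h => ?_)
  · rw [mem_coe, mem_filter, mem_indepSetFinset_iff] at hS
    obtain ⟨⟨hSind, hScard⟩, hTS⟩ := hS
    simp only [mem_coe, mem_powersetCard]
    refine ⟨fun z hz => ?_, by rw [card_sdiff_of_subset hTS, hScard]⟩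
    rw [mem_sdiff] at hz ⊢
    rw [mem_union, mem_neighborFinset, not_or]
    exact ⟨mem_univ _, hz.2, fun huz => hSind (hTS hu) hz.1 (G.ne_of_adj huz) huz⟩
  · rw [mem_coe, mem_filter] at hS₁ hS₂
    rw [← sdiff_union_of_subset hS₁.2, ← sdiff_union_of_subset hS₂.2]
    exact congrArg (· ∪ T) h

theorem numIndep_mul_choose_le {δ k t : ℕ} (hδ : ∀ v, δ ≤ G.degree v) (hk : 0 < k) :
    numIndep G t * t.choose k ≤ numIndep G k * (Fintype.card V - k - δ).choose (t - k) := by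
  simp only [numIndep_eq_card_indepSetFinset]
  refine card_mul_le_card_mul (fun S T => T ⊆ S) (fun S hS => ?_) (fun T hT => ?_)
  · obtain ⟨hSind, hScard⟩ := mem_indepSetFinset_iff.1 hS
    rw [← hScard, ← card_powersetCard]
    refine card_le_card fun T hT => ?_
    obtain ⟨hTS, hTcard⟩ := mem_powersetCard.1 hT
    simp only [bipartiteAbove, mem_filter, mem_indepSetFinset_iff]
    exact ⟨⟨hSind.mono (coe_subset.2 hTS), hTcard⟩, hTS⟩
  · obtain ⟨hTind, hTcard⟩ := mem_indepSetFinset_iff.1 hT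
    obtain ⟨u, hu⟩ := card_pos.1 (hTcard ▸ hk)
    calc #(bipartiteBelow _ _ T) ≤ _ := G.card_indepSetFinset_superset_le hTind hu t
      _ ≤ _ := by
        rw [hTcard]
        exact Nat.choose_le_choose _ (by have := hδ u; omega)

theorem numIndep_three_le_choose {n δ : ℕ} (hn : Fintype.card V = n)
    (hδ : ∀ v, δ ≤ G.degree v ∧ δ ≤ Gᶜ.degree v) (hcond : (δ + 1) * (δ + 2) ≤ 3 * n) :
    numIndep G 3 ≤ (n - δ).choose 3 := by
  have hdeg_add (v : V) : G.degree v + Gᶜ.degree v = n - 1 := by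
    have := hn ▸ G.degree_lt_card_verts v
    rw [degree_compl, hn]
    omega
  have hn0 : 0 < n := by nlinarith
  obtain ⟨v⟩ : Nonempty V := Fintype.card_pos_iff.1 (hn ▸ hn0)
  have hδn : δ < n := by
    have := hdeg_add v
    have := (hδ v).1
    omega
  have hpoint (v : V) : δ * (n - 1 - δ) ≤ G.degree v * Gᶜ.degree v := by
    obtain ⟨h₁, h₂⟩ := hδ v
    obtain ⟨a, ha⟩ := Nat.exists_eq_add_of_le h₁
    obtain ⟨b, hb⟩ := Nat.exists_eq_add_of_le h₂
    have : n - 1 - δ = δ + a + b := by have := hdeg_add v; omega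
    rw [this, ha, hb]
    nlinarith
  have hsum : n * (δ * (n - 1 - δ)) ≤ ∑ v, G.degree v * Gᶜ.degree v := by
    simpa [hn] using sum_le_sum fun v (_ : v ∈ univ) => hpoint v
  have hgoodman := G.sum_degree_mul_degree_compl_add_two_mul_numIndep_three_le
  rw [hn] at hgoodman
  linarith [two_mul_choose_three_le hδn hcond]

end SimpleGraph

/-- Let `n, δ ∈ ℕ` and let `G` be an `n`-vertex finite simple graph in which every vertex
`v` satisfies `δ ≤ d(v) ≤ n − δ − 1`.  If `3n ≥ (δ+1)(δ+2)`, then for every integer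
`t ≥ 3`, `i_t(G) ≤ C(n−δ, t)`. -/
theorem stmt_9 {V : Type*} [Fintype V] [DecidableEq V] (G : SimpleGraph V) [DecidableRel G.Adj]
    (n δ : ℕ) (hn : Fintype.card V = n)
    (hdeg : ∀ v : V, δ ≤ G.degree v ∧ (G.degree v : ℤ) ≤ (n : ℤ) - δ - 1)
    (hcond : (δ + 1) * (δ + 2) ≤ 3 * n) (t : ℕ) (ht : 3 ≤ t) :
    numIndep G t ≤ (n - δ).choose t := by
  have hδ (v : V) : δ ≤ G.degree v ∧ δ ≤ Gᶜ.degree v := by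
    refine ⟨(hdeg v).1, ?_⟩
    have := (hdeg v).2
    rw [SimpleGraph.degree_compl, hn]
    omega
  have hext := G.numIndep_mul_choose_le (t := t) (fun v => (hδ v).1) three_pos
  rw [hn] at hext
  have : numIndep G t * t.choose 3 ≤ (n - δ).choose t * t.choose 3 :=
    calc numIndep G t * t.choose 3
        ≤ numIndep G 3 * (n - 3 - δ).choose (t - 3) := hext
      _ ≤ (n - δ).choose 3 * (n - δ - 3).choose (t - 3) := by
        rw [Nat.sub_right_comm]
        gcongr
        exact G.numIndep_three_le_choose hn hδ hcond
      _ = (n - δ).choose t * t.choose 3 := (Nat.choose_mul ht).symm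
  exact Nat.le_of_mul_le_mul_right this (Nat.choose_pos ht)
end

section
/- Let n, δ ∈ ℕ and let G be an n-vertex finite simple graph with minimum degree at least δ. Then for every integer s with 2 ≤ s and s ≤ n − δ + 1, one has s · i_s(G) ≤ (n − δ − s + 1) · i_{s−1}(G). -/
open Finset

/-!
Double count the pairs `B ⊆ A` of independent sets with `#A = s` and `#B = s - 1`. Each `A` has
exactly `s` such subsets `B`. Conversely, fix `u ∈ B`: every `A` above `B` is `insert v B` for a
vertex `v` outside `B` and outside the neighbourhood of `u`, which is disjoint from `B`; so there
are at most `n - deg u - (s - 1) ≤ n - δ - s + 1` such `A`.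
-/

namespace SimpleGraph

variable {V : Type*} [Fintype V] [DecidableEq V] (G : SimpleGraph V) [DecidableRel G.Adj]

theorem filter_indepSetFinset_subset_eq_powersetCard {A : Finset V} (hA : G.IsIndepSet A)
    (k : ℕ) :
    {B ∈ G.indepSetFinset k | B ⊆ A} = A.powersetCard k := by
  ext B
  simp only [mem_filter, mem_indepSetFinset_iff, isNIndepSet_iff, mem_powersetCard]
  exact ⟨fun ⟨⟨_, hcard⟩, hBA⟩ => ⟨hBA, hcard⟩,
    fun ⟨hBA, hcard⟩ => ⟨⟨hA.mono (coe_subset.mpr hBA), hcard⟩, hBA⟩⟩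

theorem card_filter_indepSetFinset_supset_add_le {B : Finset V} (hB : G.IsIndepSet B)
    {u : V} (hu : u ∈ B) :
    #{A ∈ G.indepSetFinset (#B + 1) | B ⊆ A} + (G.degree u + #B) ≤ Fintype.card V := by
  have hdisj : Disjoint (G.neighborFinset u) B := by
    refine Finset.disjoint_left.mpr fun v hv hvB => ?_
    rw [mem_neighborFinset] at hv
    exact hB hu hvB (G.ne_of_adj hv) hv
  have hsub : {A ∈ G.indepSetFinset (#B + 1) | B ⊆ A} ⊆
      (G.neighborFinset u ∪ B)ᶜ.image (insert · B) := by
    intro A hA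
    obtain ⟨⟨hAind, hAcard⟩, hBA⟩ := by simpa only [mem_filter, mem_indepSetFinset_iff] using hA
    obtain ⟨v, hvB, rfl⟩ := exists_eq_insert_iff.mpr ⟨hBA, hAcard.symm⟩
    have hvu : ¬G.Adj u v := fun h =>
      hAind (mem_insert_of_mem hu) (mem_insert_self v B) (G.ne_of_adj h) h
    exact mem_image.mpr ⟨v, by simp [hvB, hvu], rfl⟩
  calc #{A ∈ G.indepSetFinset (#B + 1) | B ⊆ A} + (G.degree u + #B)
      ≤ #(G.neighborFinset u ∪ B)ᶜ + #(G.neighborFinset u ∪ B) := by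
        rw [card_union_of_disjoint hdisj, card_neighborFinset_eq_degree]
        exact Nat.add_le_add_right ((card_le_card hsub).trans card_image_le) _
    _ = Fintype.card V := card_compl_add_card _

end SimpleGraph

theorem stmt_10_general {V : Type*} [Fintype V] [DecidableEq V] (G : SimpleGraph V) [DecidableRel G.Adj]
    (n δ : ℕ) (hn : Fintype.card V = n) (hδ : ∀ v : V, δ ≤ G.degree v)
    (s : ℕ) (hs2 : 2 ≤ s) :
    (s : ℤ) * numIndep G s ≤ ((n : ℤ) - δ - s + 1) * numIndep G (s - 1) := by
  obtain ⟨k, rfl⟩ : ∃ k, s = k + 1 := ⟨s - 1, by omega⟩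
  rw [G.numIndep_eq_card_indepSetFinset, G.numIndep_eq_card_indepSetFinset, Nat.add_sub_cancel,
    mul_comm, mul_comm _ (#(G.indepSetFinset k) : ℤ), ← nsmul_eq_mul, ← nsmul_eq_mul]
  refine card_nsmul_le_card_nsmul (fun A B => B ⊆ A) (fun A hA => ?_) (fun B hB => ?_)
  · rw [SimpleGraph.mem_indepSetFinset_iff] at hA
    rw [bipartiteAbove, G.filter_indepSetFinset_subset_eq_powersetCard hA.isIndepSet,
      card_powersetCard, hA.card_eq, Nat.choose_succ_self_right]
  · rw [SimpleGraph.mem_indepSetFinset_iff] at hB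
    obtain ⟨u, hu⟩ : B.Nonempty := card_pos.mp (by rw [hB.card_eq]; omega)
    have hsupsets := G.card_filter_indepSetFinset_supset_add_le hB.isIndepSet hu
    rw [hB.card_eq] at hsupsets
    have hdeg := hδ u
    simp only [bipartiteBelow]
    omega

/-- Let `n, δ ∈ ℕ` and let `G` be an `n`-vertex finite simple graph with minimum degree at
least `δ`.  Then for every integer `s` with `2 ≤ s` and `s ≤ n − δ + 1`, one has
`s · i_s(G) ≤ (n − δ − s + 1) · i_{s−1}(G)` (as integers). -/
theorem stmt_10 {V : Type*} [Fintype V] [DecidableEq V] (G : SimpleGraph V) [DecidableRel G.Adj]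
    (n δ : ℕ) (hn : Fintype.card V = n) (hδ : ∀ v : V, δ ≤ G.degree v)
    (s : ℕ) (hs2 : 2 ≤ s) (hs : (s : ℤ) ≤ (n : ℤ) - δ + 1) :
    (s : ℤ) * numIndep G s ≤ ((n : ℤ) - δ - s + 1) * numIndep G (s - 1) :=
  stmt_10_general G n δ hn hδ s hs2
end

section
/- Let n, r ∈ ℕ with r ≥ 1, let G be an n-vertex r-regular triangle-free finite simple graph, and let m = nr/2 be its number of edges. Then, as rational numbers, i_4(G) ≤ C(n,4) − C(n−2,2)·m + n(n−3)·C(r,2) − n·C(r,3) + m·((m − r²)/2 − (r−1)²/4). -/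
open Finset

/-!
For a 4-set `S` let `e(S)` be the number of edges inside `S`, `s(S)` the number of claws
(a vertex with three of its neighbours) with vertex set `S`, and `p(S)` the number of labelled
paths `x - u - v - y` with vertex set `S`. In a triangle-free graph
`[e(S) = 0] + s(S) + 3/8 p(S) ≤ 1 - e(S) + C(e(S), 2)`:
`S` carries at most one claw, and then no path, since every edge of `S` passes through the
centre; a labelled path in `S` is determined by its oriented middle edge, so `p(S) ≤ 2 e(S)`,
which is tight for the 4-cycle; and if `S` spans only the three edges of a path, its two ends
are leaves and `p(S) ≤ 2`. Summing over `S`, the right-hand side is evaluated by double counting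
edges and pairs of edges (which span 3 or 4 vertices), while an `r`-regular graph has `n C(r,3)`
claws and `n r (r-1)²` labelled paths, and `n r = 2 m`.
-/

theorem Finset.sum_card_filter_subset_powersetCard {ι α : Type*} [Fintype α] [DecidableEq α]
    (s : Finset ι) (f : ι → Finset α) {k : ℕ} (hf : ∀ i ∈ s, #(f i) ≤ k) :
    ∑ S ∈ powersetCard k (univ : Finset α), #{i ∈ s | f i ⊆ S}
      = ∑ i ∈ s, (Fintype.card α - #(f i)).choose (k - #(f i)) := by
  simp_rw [card_filter]
  rw [sum_comm]
  refine sum_congr rfl fun i hi => ?_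
  rw [← card_filter, ← card_univ,
    ← card_filter_powersetCard_subset _ _ _ (subset_univ _) (hf i hi)]

theorem Finset.card_le_two_mul_card_image_sym2 {α : Type*} [DecidableEq α]
    (A : Finset (α × α)) : #A ≤ 2 * #(A.image fun q => s(q.1, q.2)) := by
  refine card_le_mul_card_image A 2 fun z hz => ?_
  obtain ⟨q, -, rfl⟩ := mem_image.1 hz
  refine (card_le_card (t := {q, q.swap}) fun q' hq' => ?_).trans card_le_two
  rcases Sym2.mk_eq_mk_iff.1 (mem_filter.1 hq').2 with rfl | rfl <;> simp

lemma ite_add_add_le {e s p : ℕ} (hs : s ≤ 1) (hs₁ : s = 1 → p = 0 ∧ 3 ≤ e)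
    (hp : p ≠ 0 → 3 ≤ e) (hp₃ : e = 3 → p ≤ 2) (hp₂ : p ≤ 2 * e) :
    (if e = 0 then 1 else 0 : ℚ) + s + 3 / 8 * p ≤ 1 - e + ((e : ℚ) * e - e) / 2 := by
  have hs' : s = 0 ∨ s = 1 := by omega
  rcases (by omega : e ≤ 2 ∨ e = 3 ∨ 4 ≤ e) with h | rfl | h4
  · obtain rfl : p = 0 := by
      by_contra h'
      have := hp h'
      omega
    obtain rfl : s = 0 := by
      rcases hs' with h' | h'
      · exact h'
      · have := (hs₁ h').2
        omega
    interval_cases e <;> norm_num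
  · rcases hs' with rfl | rfl
    · have : (p : ℚ) ≤ 2 := by exact_mod_cast hp₃ rfl
      norm_num
      linarith
    · rw [(hs₁ rfl).1]
      norm_num
  · rw [if_neg (by omega)]
    have he : (4 : ℚ) ≤ e := by exact_mod_cast h4
    rcases hs' with rfl | rfl
    · have : (p : ℚ) ≤ 2 * e := by exact_mod_cast hp₂
      push_cast
      nlinarith
    · rw [(hs₁ rfl).1]
      push_cast
      nlinarith

namespace SimpleGraph

variable {V : Type*} {G : SimpleGraph V}

lemma CliqueFree.not_adj_of_adj_of_adj (hG : G.CliqueFree 3) {a b c : V} (hab : G.Adj a b)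
    (hac : G.Adj a c) : ¬ G.Adj b c :=
  fun hbc => by classical exact hG {a, b, c} (is3Clique_triple_iff.2 ⟨hab, hac, hbc⟩)

section EdgesIn

variable [Fintype V] [DecidableEq V] [DecidableRel G.Adj]

variable (G) in
def edgesIn (S : Finset V) : Finset (Sym2 V) := {e ∈ G.edgeFinset | e.toFinset ⊆ S}

@[simp]
lemma mk_mem_edgesIn {S : Finset V} {a b : V} :
    s(a, b) ∈ G.edgesIn S ↔ G.Adj a b ∧ a ∈ S ∧ b ∈ S := by
  simp [edgesIn, Sym2.toFinset_mk_eq, insert_subset_iff]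

lemma edgesIn_eq_empty_iff {S : Finset V} :
    G.edgesIn S = ∅ ↔ ∀ u ∈ S, ∀ v ∈ S, ¬ G.Adj u v := by
  refine ⟨fun h u hu v hv huv => ?_, fun h => eq_empty_of_forall_notMem fun e he => ?_⟩
  · simpa [h] using mk_mem_edgesIn.2 ⟨huv, hu, hv⟩
  · induction e with
    | _ a b =>
      obtain ⟨hab, ha, hb⟩ := mk_mem_edgesIn.1 he
      exact h a ha b hb hab

lemma numIndep_eq_card_filter_edgesIn (k : ℕ) :
    numIndep G k = #{S ∈ powersetCard k univ | G.edgesIn S = ∅} := by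
  simp_rw [edgesIn_eq_empty_iff]
  rfl

lemma card_toFinset_of_mem_edgeFinset {e : Sym2 V} (he : e ∈ G.edgeFinset) : #e.toFinset = 2 :=
  Sym2.card_toFinset_of_not_isDiag e (G.not_isDiag_of_mem_edgeSet (mem_edgeFinset.1 he))

lemma sum_card_edgesIn {k : ℕ} (hk : 2 ≤ k) :
    ∑ S ∈ powersetCard k univ, #(G.edgesIn S)
      = #G.edgeFinset * (Fintype.card V - 2).choose (k - 2) := by
  have h2 : ∀ e ∈ G.edgeFinset, #e.toFinset = 2 := fun e he => card_toFinset_of_mem_edgeFinset he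
  unfold edgesIn
  rw [sum_card_filter_subset_powersetCard _ _ fun e he => (h2 e he).trans_le hk,
    sum_congr rfl fun e he => by rw [h2 e he], sum_const, smul_eq_mul]

variable (G) in
def incidentEdgePairs : Finset (Sym2 V × Sym2 V) :=
  {p ∈ G.edgeFinset.offDiag | ∃ v, v ∈ p.1 ∧ v ∈ p.2}

lemma card_incidentEdgePairs :
    #G.incidentEdgePairs = ∑ v, (G.degree v * G.degree v - G.degree v) := by
  have heq : G.incidentEdgePairs = univ.biUnion fun v => (G.incidenceFinset v).offDiag := by
    ext p
    simp only [incidentEdgePairs, mem_filter, mem_offDiag, mem_biUnion, mem_univ, true_and,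
      incidenceFinset_eq_filter]
    constructor
    · rintro ⟨⟨h1, h2, h3⟩, v, hv1, hv2⟩
      exact ⟨v, ⟨h1, hv1⟩, ⟨h2, hv2⟩, h3⟩
    · rintro ⟨v, ⟨h1, hv1⟩, ⟨h2, hv2⟩, h3⟩
      exact ⟨⟨h1, h2, h3⟩, v, hv1, hv2⟩
  rw [heq, card_biUnion]
  · simp only [offDiag_card, card_incidenceFinset_eq_degree]
  · intro x _ y _ hxy
    refine Finset.disjoint_left.2 fun p hp1 hp2 => ?_
    simp only [mem_offDiag, incidenceFinset_eq_filter, mem_filter] at hp1 hp2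
    exact hp1.2.2 (((Sym2.mem_and_mem_iff hxy).1 ⟨hp1.1.2, hp2.1.2⟩).trans
      ((Sym2.mem_and_mem_iff hxy).1 ⟨hp1.2.1.2, hp2.2.1.2⟩).symm)

lemma card_toFinset_union_of_ne {e f : Sym2 V} (he : e ∈ G.edgeFinset) (hf : f ∈ G.edgeFinset)
    (hef : e ≠ f) : #(e.toFinset ∪ f.toFinset) = if ∃ v, v ∈ e ∧ v ∈ f then 3 else 4 := by
  have hle : #(e.toFinset ∩ f.toFinset) ≤ 1 := card_le_one.2 fun a ha b hb => by
    by_contra hab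
    simp only [mem_inter, Sym2.mem_toFinset] at ha hb
    exact hef (((Sym2.mem_and_mem_iff hab).1 ⟨ha.1, hb.1⟩).trans
      ((Sym2.mem_and_mem_iff hab).1 ⟨ha.2, hb.2⟩).symm)
  have hunion := card_union_add_card_inter e.toFinset f.toFinset
  rw [card_toFinset_of_mem_edgeFinset he, card_toFinset_of_mem_edgeFinset hf] at hunion
  split_ifs with h
  · obtain ⟨v, hv⟩ := h
    have : 0 < #(e.toFinset ∩ f.toFinset) := card_pos.2 ⟨v, by simpa using hv⟩
    omega
  · have : e.toFinset ∩ f.toFinset = ∅ :=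
      eq_empty_of_forall_notMem fun v hv => h ⟨v, by simpa using hv⟩
    rw [this, card_empty] at hunion
    omega

lemma offDiag_edgesIn (S : Finset V) :
    (G.edgesIn S).offDiag = {p ∈ G.edgeFinset.offDiag | p.1.toFinset ∪ p.2.toFinset ⊆ S} := by
  ext p
  simp only [edgesIn, mem_offDiag, mem_filter, union_subset_iff]
  tauto

lemma sum_card_offDiag_edgesIn :
    ∑ S ∈ powersetCard 4 univ, (#(G.edgesIn S).offDiag : ℚ)
      = #G.edgeFinset.offDiag + ((Fintype.card V : ℚ) - 4) * #G.incidentEdgePairs := by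
  have hterm : ∀ p ∈ G.edgeFinset.offDiag,
      (((Fintype.card V - #(p.1.toFinset ∪ p.2.toFinset)).choose
          (4 - #(p.1.toFinset ∪ p.2.toFinset)) : ℕ) : ℚ)
        = 1 + if ∃ v, v ∈ p.1 ∧ v ∈ p.2 then (Fintype.card V : ℚ) - 4 else 0 := by
    intro p hp
    obtain ⟨he, hf, hef⟩ := mem_offDiag.1 hp
    have hn := card_le_univ (p.1.toFinset ∪ p.2.toFinset)
    rw [card_toFinset_union_of_ne he hf hef] at hn ⊢
    split_ifs at hn ⊢
    · rw [Nat.choose_one_right, Nat.cast_sub hn]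
      ring
    · simp
  simp_rw [offDiag_edgesIn]
  rw [← Nat.cast_sum, sum_card_filter_subset_powersetCard _ _ fun p hp => ?_, Nat.cast_sum,
    sum_congr rfl hterm, sum_add_distrib, ← sum_filter, sum_const, sum_const, incidentEdgePairs]
  · simp [mul_comm]
  · obtain ⟨he, hf, hef⟩ := mem_offDiag.1 hp
    rw [card_toFinset_union_of_ne he hf hef]
    split_ifs <;> norm_num

end EdgesIn

section Claws

variable [Fintype V] [DecidableRel G.Adj]

variable (G) in
def claws : Finset (Σ _ : V, Finset V) :=
  univ.sigma fun c => (G.neighborFinset c).powersetCard 3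

lemma mem_claws {c : V} {A : Finset V} :
    ⟨c, A⟩ ∈ G.claws ↔ A ⊆ G.neighborFinset c ∧ #A = 3 := by
  simp [claws]

lemma card_claws : #G.claws = ∑ c, (G.degree c).choose 3 := by
  simp [claws]

lemma notMem_of_mem_claws {c : V} {A : Finset V} (h : ⟨c, A⟩ ∈ G.claws) : c ∉ A :=
  fun hc => G.irrefl ((G.mem_neighborFinset c c).1 ((mem_claws.1 h).1 hc))

variable [DecidableEq V]

lemma card_insert_of_mem_claws {c : V} {A : Finset V} (h : ⟨c, A⟩ ∈ G.claws) :
    #(insert c A) = 4 := by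
  rw [card_insert_of_notMem (notMem_of_mem_claws h), (mem_claws.1 h).2]

lemma adj_of_mem_claws {c : V} {A : Finset V} (h : ⟨c, A⟩ ∈ G.claws) {a : V}
    (ha : a ∈ insert c A) (hac : a ≠ c) : G.Adj c a :=
  (G.mem_neighborFinset c a).1 ((mem_claws.1 h).1 ((mem_insert.1 ha).resolve_left hac))

lemma three_le_card_edgesIn_of_mem_claws {c : V} {A : Finset V} (h : ⟨c, A⟩ ∈ G.claws) :
    3 ≤ #(G.edgesIn (insert c A)) := by
  calc 3 = #(A.image fun a => s(c, a)) := by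
        rw [card_image_of_injective _ fun a b hab => Sym2.congr_right.1 hab, (mem_claws.1 h).2]
    _ ≤ _ := card_le_card <| image_subset_iff.2 fun a ha => mk_mem_edgesIn.2
        ⟨adj_of_mem_claws h (mem_insert_of_mem ha) (ne_of_mem_of_not_mem ha
          (notMem_of_mem_claws h)), mem_insert_self c A, mem_insert_of_mem ha⟩

lemma eq_or_eq_of_mem_claws (hG : G.CliqueFree 3) {c : V} {A : Finset V} (h : ⟨c, A⟩ ∈ G.claws)
    {a b : V} (ha : a ∈ insert c A) (hb : b ∈ insert c A) (hab : G.Adj a b) : a = c ∨ b = c := by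
  by_contra! hne
  exact hG.not_adj_of_adj_of_adj (adj_of_mem_claws h ha hne.1) (adj_of_mem_claws h hb hne.2) hab

variable (G) in
def clawsOn (S : Finset V) : Finset (Σ _ : V, Finset V) := {c ∈ G.claws | insert c.1 c.2 = S}

lemma card_clawsOn_le_one (hG : G.CliqueFree 3) (S : Finset V) : #(G.clawsOn S) ≤ 1 := by
  refine card_le_one.2 ?_
  rintro ⟨c, A⟩ h ⟨c', A'⟩ h'
  obtain ⟨hcl, rfl⟩ := mem_filter.1 h
  obtain ⟨hcl', hS⟩ := mem_filter.1 h'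
  have hc' : c' ∈ insert c A := hS ▸ mem_insert_self c' A'
  obtain rfl : c = c' := by
    by_contra hne
    have h3 : 1 < #((insert c A).erase c) := by
      rw [card_erase_of_mem (mem_insert_self c A), card_insert_of_mem_claws hcl]
      norm_num
    obtain ⟨a, ha, hac'⟩ := exists_mem_ne h3 c'
    obtain ⟨hac, ha⟩ := mem_erase.1 ha
    exact hG.not_adj_of_adj_of_adj (adj_of_mem_claws hcl hc' (Ne.symm hne))
      (adj_of_mem_claws hcl ha hac) (adj_of_mem_claws hcl' (hS ▸ ha) hac')
  obtain rfl : A' = A := by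
    simpa [erase_insert (notMem_of_mem_claws hcl), erase_insert (notMem_of_mem_claws hcl')]
      using congrArg (·.erase c) hS
  rfl

end Claws

section ThreePaths

variable [Fintype V] [DecidableEq V] [DecidableRel G.Adj]

variable (G) in
/-- `⟨u, v, x, y⟩` encodes the path `x - u - v - y`. -/
def threePaths : Finset (Σ _ : V, Σ _ : V, V × V) :=
  univ.sigma fun u => (G.neighborFinset u).sigma fun v =>
    (G.neighborFinset u).erase v ×ˢ (G.neighborFinset v).erase u

def pathSupport (w : Σ _ : V, Σ _ : V, V × V) : Finset V := {w.2.2.1, w.1, w.2.1, w.2.2.2}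

variable (G) in
def threePathsOn (S : Finset V) : Finset (Σ _ : V, Σ _ : V, V × V) :=
  {w ∈ G.threePaths | pathSupport w = S}

lemma mem_threePaths {u v x y : V} :
    ⟨u, v, x, y⟩ ∈ G.threePaths ↔ G.Adj u v ∧ G.Adj u x ∧ G.Adj v y ∧ x ≠ v ∧ y ≠ u := by
  simp [threePaths]
  tauto

lemma card_threePaths : (#G.threePaths : ℚ)
    = ∑ u, ∑ v ∈ G.neighborFinset u, ((G.degree u : ℚ) - 1) * ((G.degree v : ℚ) - 1) := by
  simp only [threePaths, card_sigma, card_product]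
  push_cast
  refine sum_congr rfl fun u _ => sum_congr rfl fun v hv => ?_
  have hu : u ∈ G.neighborFinset v :=
    (G.mem_neighborFinset v u).2 ((G.mem_neighborFinset u v).1 hv).symm
  rw [card_erase_of_mem hv, card_erase_of_mem hu, Nat.cast_sub (card_pos.2 ⟨v, hv⟩),
    Nat.cast_sub (card_pos.2 ⟨u, hu⟩), card_neighborFinset_eq_degree,
    card_neighborFinset_eq_degree, Nat.cast_one]

lemma ne_of_mem_threePaths (hG : G.CliqueFree 3) {u v x y : V}
    (hw : ⟨u, v, x, y⟩ ∈ G.threePaths) :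
    x ≠ u ∧ x ≠ v ∧ x ≠ y ∧ u ≠ v ∧ u ≠ y ∧ v ≠ y := by
  obtain ⟨huv, hux, hvy, hxv, hyu⟩ := mem_threePaths.1 hw
  refine ⟨hux.ne', hxv, ?_, huv.ne, hyu.symm, hvy.ne⟩
  rintro rfl
  exact hG.not_adj_of_adj_of_adj huv.symm hvy hux

lemma card_pathSupport (hG : G.CliqueFree 3) {w} (hw : w ∈ G.threePaths) :
    #(pathSupport w) = 4 := by
  obtain ⟨u, v, x, y⟩ := w
  obtain ⟨hxu, hxv, hxy, huv, huy, hvy⟩ := ne_of_mem_threePaths hG hw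
  simp [pathSupport, card_insert_of_notMem, *]

lemma pathEdges_subset_edgesIn {u v x y : V} (hw : ⟨u, v, x, y⟩ ∈ G.threePaths) :
    {s(u, x), s(u, v), s(v, y)} ⊆ G.edgesIn (pathSupport ⟨u, v, x, y⟩) := by
  obtain ⟨huv, hux, hvy, -, -⟩ := mem_threePaths.1 hw
  simp [insert_subset_iff, pathSupport, huv, hux, hvy]

lemma card_pathEdges (hG : G.CliqueFree 3) {u v x y : V} (hw : ⟨u, v, x, y⟩ ∈ G.threePaths) :
    #{s(u, x), s(u, v), s(v, y)} = 3 := by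
  obtain ⟨hxu, hxv, hxy, huv, huy, hvy⟩ := ne_of_mem_threePaths hG hw
  rw [card_insert_of_notMem (by simp [*]), card_insert_of_notMem (by simp [*]),
    card_singleton]

lemma three_le_card_edgesIn_of_mem_threePaths (hG : G.CliqueFree 3) {w}
    (hw : w ∈ G.threePaths) : 3 ≤ #(G.edgesIn (pathSupport w)) := by
  obtain ⟨u, v, x, y⟩ := w
  exact (card_pathEdges hG hw).symm.le.trans (card_le_card (pathEdges_subset_edgesIn hw))

lemma threePathsOn_eq_empty_of_mem_claws (hG : G.CliqueFree 3) {c : V} {A : Finset V}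
    (h : ⟨c, A⟩ ∈ G.claws) : G.threePathsOn (insert c A) = ∅ := by
  refine filter_eq_empty_iff.2 fun ⟨u, v, x, y⟩ hw hS => ?_
  obtain ⟨-, hux, hvy, -, -⟩ := mem_threePaths.1 hw
  obtain ⟨hxu, hxv, hxy, huv, huy, hvy'⟩ := ne_of_mem_threePaths hG hw
  have hmem : ∀ z ∈ pathSupport ⟨u, v, x, y⟩, z ∈ insert c A := fun z hz => hS ▸ hz
  -- both edges `x u` and `v y` would have to pass through the centre `c`
  rcases eq_or_eq_of_mem_claws hG h (hmem u (by simp [pathSupport]))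
      (hmem x (by simp [pathSupport])) hux with rfl | rfl <;>
    rcases eq_or_eq_of_mem_claws hG h (hmem v (by simp [pathSupport]))
      (hmem y (by simp [pathSupport])) hvy with rfl | rfl <;>
    simp_all

/-- The end `x` of a path is the only neighbour of `u` in the support other than `v`:
the remaining vertex `y` is adjacent to `v`, so `u ~ y` would close a triangle. -/
lemma eq_of_mem_threePaths_of_pathSupport_eq (hG : G.CliqueFree 3) {u v x y x' y' : V}
    (hw : ⟨u, v, x, y⟩ ∈ G.threePaths) (hw' : ⟨u, v, x', y'⟩ ∈ G.threePaths)
    (h : pathSupport ⟨u, v, x', y'⟩ = pathSupport ⟨u, v, x, y⟩) : x' = x ∧ y' = y := by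
  obtain ⟨huv, hux, hvy, -, -⟩ := mem_threePaths.1 hw
  obtain ⟨-, hux', hvy', hxv', hyu'⟩ := mem_threePaths.1 hw'
  have hx' : x' ∈ pathSupport ⟨u, v, x, y⟩ := h ▸ by simp [pathSupport]
  have hy' : y' ∈ pathSupport ⟨u, v, x, y⟩ := h ▸ by simp [pathSupport]
  simp only [pathSupport, mem_insert, mem_singleton] at hx' hy'
  refine ⟨?_, ?_⟩
  · rcases hx' with hx' | rfl | rfl | rfl
    · exact hx'
    · exact absurd hux' G.irrefl
    · exact absurd rfl hxv'
    · exact absurd hvy (hG.not_adj_of_adj_of_adj huv hux')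
  · rcases hy' with rfl | rfl | rfl | hy'
    · exact absurd hux (hG.not_adj_of_adj_of_adj huv.symm hvy')
    · exact absurd rfl hyu'
    · exact absurd hvy' G.irrefl
    · exact hy'

lemma injOn_middle (hG : G.CliqueFree 3) (S : Finset V) :
    Set.InjOn (fun w : Σ _ : V, Σ _ : V, V × V => (w.1, w.2.1)) (G.threePathsOn S) := by
  rintro ⟨u, v, x, y⟩ hw ⟨u', v', x', y'⟩ hw' heq
  obtain ⟨rfl, rfl⟩ := Prod.ext_iff.1 heq
  obtain ⟨hw, hS⟩ := mem_filter.1 hw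
  obtain ⟨hw', hS'⟩ := mem_filter.1 hw'
  obtain ⟨rfl, rfl⟩ := eq_of_mem_threePaths_of_pathSupport_eq hG hw hw' (hS'.trans hS.symm)
  rfl

lemma card_threePathsOn_le_two_mul (hG : G.CliqueFree 3) (S : Finset V) :
    #(G.threePathsOn S) ≤ 2 * #(G.edgesIn S) := by
  rw [← card_image_of_injOn (injOn_middle hG S)]
  refine (card_le_two_mul_card_image_sym2 _).trans (Nat.mul_le_mul_left 2 (card_le_card ?_))
  intro e he
  obtain ⟨q, hq, rfl⟩ := mem_image.1 he
  obtain ⟨⟨u, v, x, y⟩, hw, rfl⟩ := mem_image.1 hq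
  obtain ⟨hpath, rfl⟩ := mem_filter.1 hw
  exact mk_mem_edgesIn.2 ⟨(mem_threePaths.1 hpath).1, by simp [pathSupport], by simp [pathSupport]⟩

lemma card_threePathsOn_le_two (hG : G.CliqueFree 3) {S : Finset V}
    (h3 : #(G.edgesIn S) = 3) : #(G.threePathsOn S) ≤ 2 := by
  rcases eq_empty_or_nonempty (G.threePathsOn S) with h | ⟨⟨u₀, v₀, x₀, y₀⟩, h₀⟩
  · simp [h]
  obtain ⟨hw₀, rfl⟩ := mem_filter.1 h₀
  have hE := eq_of_subset_of_card_le (pathEdges_subset_edgesIn hw₀)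
    (by rw [h3, card_pathEdges hG hw₀])
  obtain ⟨hxu, hxv, hxy, huv, huy, hvy⟩ := ne_of_mem_threePaths hG hw₀
  -- `x₀` and `y₀` have a single neighbour in `S`, so only `u₀`, `v₀` can be inner vertices
  have hinner : ∀ z ∈ pathSupport ⟨u₀, v₀, x₀, y₀⟩, ∀ a ∈ pathSupport ⟨u₀, v₀, x₀, y₀⟩,
      ∀ b ∈ pathSupport ⟨u₀, v₀, x₀, y₀⟩, G.Adj z a → G.Adj z b → a ≠ b → z = u₀ ∨ z = v₀ := by
    intro z hz a ha b hb hza hzb hab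
    have h1 := mk_mem_edgesIn.2 ⟨hza, hz, ha⟩
    have h2 := mk_mem_edgesIn.2 ⟨hzb, hz, hb⟩
    rw [← hE] at h1 h2
    simp only [pathSupport, mem_insert, mem_singleton, Sym2.eq_iff] at hz h1 h2
    grind
  rw [← card_image_of_injOn (injOn_middle hG _)]
  refine (card_le_card (t := {(u₀, v₀), (v₀, u₀)}) ?_).trans card_le_two
  intro q hq
  obtain ⟨⟨u, v, x, y⟩, hw, rfl⟩ := mem_image.1 hq
  obtain ⟨hw, hS⟩ := mem_filter.1 hw
  obtain ⟨huv', hux', hvy', hxv', hyu'⟩ := mem_threePaths.1 hw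
  have hmem : ∀ z ∈ pathSupport ⟨u, v, x, y⟩, z ∈ pathSupport ⟨u₀, v₀, x₀, y₀⟩ :=
    fun z hz => hS ▸ hz
  have hu := hinner u (hmem u (by simp [pathSupport])) x (hmem x (by simp [pathSupport]))
    v (hmem v (by simp [pathSupport])) hux' huv' hxv'
  have hv := hinner v (hmem v (by simp [pathSupport])) u (hmem u (by simp [pathSupport]))
    y (hmem y (by simp [pathSupport])) huv'.symm hvy' hyu'.symm
  rcases hu with rfl | rfl <;> rcases hv with rfl | rfl <;> simp_all

end ThreePaths

variable [Fintype V] [DecidableEq V] [DecidableRel G.Adj]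

lemma ite_add_card_clawsOn_add_le (hG : G.CliqueFree 3) (S : Finset V) :
    (if G.edgesIn S = ∅ then 1 else 0 : ℚ) + #(G.clawsOn S) + 3 / 8 * #(G.threePathsOn S)
      ≤ 1 - #(G.edgesIn S) + #(G.edgesIn S).offDiag / 2 := by
  rw [offDiag_card, Nat.cast_sub (Nat.le_mul_self _), Nat.cast_mul]
  simp only [← card_eq_zero (s := G.edgesIn S)]
  refine ite_add_add_le (card_clawsOn_le_one hG S) (fun h => ?_) (fun h => ?_)
    (card_threePathsOn_le_two hG) (card_threePathsOn_le_two_mul hG S)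
  · obtain ⟨⟨c, A⟩, hcS⟩ := card_pos.1 (h ▸ one_pos)
    obtain ⟨hc, rfl⟩ := mem_filter.1 hcS
    exact ⟨by rw [threePathsOn_eq_empty_of_mem_claws hG hc, card_empty],
      three_le_card_edgesIn_of_mem_claws hc⟩
  · obtain ⟨w, hwS⟩ := card_ne_zero.1 h
    obtain ⟨hw, rfl⟩ := mem_filter.1 hwS
    exact three_le_card_edgesIn_of_mem_threePaths hG hw

theorem numIndep_four_add_le (hG : G.CliqueFree 3) :
    (numIndep G 4 : ℚ) + #G.claws + 3 / 8 * #G.threePaths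
      ≤ (Fintype.card V).choose 4 - #G.edgeFinset * (Fintype.card V - 2).choose 2
        + (#G.edgeFinset.offDiag + ((Fintype.card V : ℚ) - 4) * #G.incidentEdgePairs) / 2 := by
  have hclaws : #G.claws = ∑ S ∈ powersetCard 4 univ, #(G.clawsOn S) :=
    card_eq_sum_card_fiberwise fun _ h => mem_powersetCard_univ.2 (card_insert_of_mem_claws h)
  have hpaths : #G.threePaths = ∑ S ∈ powersetCard 4 univ, #(G.threePathsOn S) :=
    card_eq_sum_card_fiberwise fun _ h => mem_powersetCard_univ.2 (card_pathSupport hG h)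
  rw [numIndep_eq_card_filter_edgesIn, card_filter, hclaws, hpaths, ← sum_card_offDiag_edgesIn]
  push_cast
  calc _ = ∑ S ∈ powersetCard 4 univ, ((if G.edgesIn S = ∅ then 1 else 0 : ℚ)
          + #(G.clawsOn S) + 3 / 8 * #(G.threePathsOn S)) := by
        rw [sum_add_distrib, sum_add_distrib, mul_sum]
    _ ≤ ∑ S ∈ powersetCard 4 univ, (1 - #(G.edgesIn S) + #(G.edgesIn S).offDiag / 2 : ℚ) :=
        sum_le_sum fun S _ => ite_add_card_clawsOn_add_le hG S
    _ = _ := by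
        rw [sum_add_distrib, sum_sub_distrib, ← sum_div, sum_const, card_powersetCard, card_univ,
          ← Nat.cast_sum, sum_card_edgesIn (by norm_num)]
        simp

end SimpleGraph

open SimpleGraph in
theorem stmt_14_general {V : Type*} [Fintype V] [DecidableEq V] (G : SimpleGraph V) [DecidableRel G.Adj]
    (n r m : ℕ) (hn : Fintype.card V = n) (hreg : G.IsRegularOfDegree r)
    (htf : G.CliqueFree 3) (hm : G.edgeFinset.card = m) :
    (numIndep G 4 : ℚ) ≤
      (n.choose 4 : ℚ) - ((n - 2).choose 2 : ℚ) * m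
        + (n : ℚ) * ((n : ℚ) - 3) * (r.choose 2 : ℚ) - (n : ℚ) * (r.choose 3 : ℚ)
        + (m : ℚ) * (((m : ℚ) - (r : ℚ) ^ 2) / 2 - ((r : ℚ) - 1) ^ 2 / 4) := by
  subst hn hm
  have hhandshake : (Fintype.card V : ℚ) * r = 2 * #G.edgeFinset := by
    have := G.sum_degrees_eq_twice_card_edges
    simp only [hreg.degree_eq, sum_const, card_univ, smul_eq_mul] at this
    exact_mod_cast this
  have key := numIndep_four_add_le htf
  rw [card_claws, card_threePaths, card_incidentEdgePairs, offDiag_card] at key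
  simp only [hreg.degree_eq, sum_const, card_univ, card_neighborFinset_eq_degree,
    nsmul_eq_mul] at key
  push_cast [Nat.cast_sub (Nat.le_mul_self _)] at key
  rw [Nat.cast_choose_two ℚ r]
  linear_combination key - (((r : ℚ) - 1) / 2 + 3 / 8 * ((r : ℚ) - 1) ^ 2) * hhandshake

/-- Let `n, r ∈ ℕ` with `r ≥ 1`, let `G` be an `n`-vertex `r`-regular triangle-free
finite simple graph, and let `m = nr/2` be its number of edges.  Then, as rational numbers,
`i_4(G) ≤ C(n,4) − C(n−2,2)·m + n(n−3)·C(r,2) − n·C(r,3) + m·((m − r²)/2 − (r−1)²/4)`. -/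
theorem stmt_14 {V : Type*} [Fintype V] [DecidableEq V] (G : SimpleGraph V) [DecidableRel G.Adj]
    (n r m : ℕ) (hr : 1 ≤ r) (hn : Fintype.card V = n) (hreg : G.IsRegularOfDegree r)
    (htf : G.CliqueFree 3) (hm : G.edgeFinset.card = m) :
    (numIndep G 4 : ℚ) ≤
      (n.choose 4 : ℚ) - ((n - 2).choose 2 : ℚ) * m
        + (n : ℚ) * ((n : ℚ) - 3) * (r.choose 2 : ℚ) - (n : ℚ) * (r.choose 3 : ℚ)
        + (m : ℚ) * (((m : ℚ) - (r : ℚ) ^ 2) / 2 - ((r : ℚ) - 1) ^ 2 / 4) :=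
  stmt_14_general G n r m hn hreg htf hm
end
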